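/- arXiv:1608.06270 — 10 statements merged into one kernel-verified Lean document; each statement's English description precedes it below -/
import Mathlib

section
/- Let n ∈ ℕ. Suppose there exist vectors ψ₁, …, ψₙ ∈ 𝓗 with ⟨ψ₀, ψⱼ⟩ = 0 for all 1 ≤ j ≤ n, and numbers E₁, …, Eₙ ∈ ℂ, such that for all m ∈ ℕ with 1 ≤ m ≤ n one has H₀ψₘ + Vψₘ₋₁ = Σ_{k=0}^{m} E_k ψ_{m−k} (where the index 0 refers to ψ₀ and E₀). Then for every m with 1 ≤ m ≤ n: lim_{λ→0⁺} λ^{−m} ( E(λ) − Σ_{k=0}^{m} E_k λ^k ) = 0 and lim_{λ→0⁺} λ^{−m} ⟨ψ₀, V( ψ(λ) − Σ_{k=0}^{m} λ^k ψ_k )⟩ = 0. -/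
open Filter
open scoped InnerProductSpace ComplexConjugate

lemma sum_triangle' {M : Type*} [AddCommMonoid M] (m : ℕ) (f : ℕ → ℕ → M) :
    ∑ k ∈ Finset.range (m+1), ∑ j ∈ Finset.range (k+1), f j (k - j)
      = ∑ j ∈ Finset.range (m+1), ∑ i ∈ Finset.range (m+1),
          if j + i ≤ m then f j i else 0 := by
  have hR : ∀ j, (∑ i ∈ Finset.range (m+1), if j + i ≤ m then f j i else 0)
      = ∑ i ∈ (Finset.range (m+1)).filter (fun i => j + i ≤ m), f j i := by
    intro j; rw [Finset.sum_filter]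
  simp_rw [hR]
  rw [Finset.sum_sigma', Finset.sum_sigma']
  apply Finset.sum_nbij' (i := fun x => (⟨x.2, x.1 - x.2⟩ : (_ : ℕ) × ℕ))
    (j := fun x => (⟨x.1 + x.2, x.1⟩ : (_ : ℕ) × ℕ))
  · intro a ha
    simp only [Finset.mem_sigma, Finset.mem_range, Finset.mem_filter] at ha ⊢
    omega
  · intro a ha
    simp only [Finset.mem_sigma, Finset.mem_range, Finset.mem_filter] at ha ⊢
    omega
  · intro a ha
    obtain ⟨k, j⟩ := a
    simp only [Finset.mem_sigma, Finset.mem_range] at ha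
    have h : j + (k - j) = k := by omega
    simp [h]
  · intro a ha
    obtain ⟨j, i⟩ := a
    simp only [Finset.mem_sigma, Finset.mem_range, Finset.mem_filter] at ha
    have h : j + i - j = i := by omega
    simp [h]
  · intro a ha; rfl

/-- **Asymptotic expansion from the recursion (Lemma 3.2).**
Let `𝓗` be a complex Hilbert space, `H₀, V` everywhere-defined symmetric linear
operators, and suppose for every `λ ∈ [0, λ₀]` we have an eigenpair
`(H₀ + λV)ψ(λ) = E(λ)ψ(λ)` with `ψ(λ) → ψ₀ ≠ 0`, `E(λ) → E₀` as `λ → 0⁺` and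
`⟨ψ₀, ψ(λ)⟩ = 1`.  If `ψ₁,…,ψₙ ⟂ ψ₀` and `E₁,…,Eₙ` satisfy the recursion
`H₀ψₘ + Vψₘ₋₁ = ∑_{k=0}^m E_k ψ_{m-k}` for `1 ≤ m ≤ n`, then for every
`1 ≤ m ≤ n` both asymptotic expansions hold as `λ → 0⁺`. -/
theorem stmt0
    {𝓗 : Type*} [NormedAddCommGroup 𝓗] [InnerProductSpace ℂ 𝓗] [CompleteSpace 𝓗]
    (H₀ V : 𝓗 →ₗ[ℂ] 𝓗)
    (hH₀sym : ∀ x y : 𝓗, ⟪H₀ x, y⟫_ℂ = ⟪x, H₀ y⟫_ℂ)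
    (hVsym : ∀ x y : 𝓗, ⟪V x, y⟫_ℂ = ⟪x, V y⟫_ℂ)
    (lam0 : ℝ) (hlam0 : 0 < lam0)
    (E : ℝ → ℝ) (ψ : ℝ → 𝓗)
    (heig : ∀ lam ∈ Set.Icc (0 : ℝ) lam0,
      H₀ (ψ lam) + (lam : ℂ) • V (ψ lam) = (E lam : ℂ) • ψ lam)
    (hψ0ne : ψ 0 ≠ 0)
    (hψcont : Tendsto ψ (nhdsWithin 0 (Set.Ioi 0)) (nhds (ψ 0)))
    (hEcont : Tendsto E (nhdsWithin 0 (Set.Ioi 0)) (nhds (E 0)))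
    (hnorm : ∀ lam ∈ Set.Icc (0 : ℝ) lam0, ⟪ψ 0, ψ lam⟫_ℂ = 1)
    (n : ℕ) (ψs : ℕ → 𝓗) (Es : ℕ → ℂ)
    (hψs0 : ψs 0 = ψ 0) (hEs0 : Es 0 = (E 0 : ℂ))
    (horth : ∀ j, 1 ≤ j → j ≤ n → ⟪ψ 0, ψs j⟫_ℂ = 0)
    (hrec : ∀ m, 1 ≤ m → m ≤ n →
      H₀ (ψs m) + V (ψs (m - 1)) = ∑ k ∈ Finset.range (m + 1), Es k • ψs (m - k)) :
    ∀ m, 1 ≤ m → m ≤ n →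
      (Tendsto (fun lam : ℝ => ((lam : ℂ) ^ m)⁻¹ *
            ((E lam : ℂ) - ∑ k ∈ Finset.range (m + 1), Es k * (lam : ℂ) ^ k))
          (nhdsWithin 0 (Set.Ioi 0)) (nhds 0)) ∧
      (Tendsto (fun lam : ℝ => ((lam : ℂ) ^ m)⁻¹ *
            ⟪ψ 0, V (ψ lam - ∑ k ∈ Finset.range (m + 1), (lam : ℂ) ^ k • ψs k)⟫_ℂ)
          (nhdsWithin 0 (Set.Ioi 0)) (nhds 0)) := by
  intro m hm1 hmn
  have h0mem : (0:ℝ) ∈ Set.Icc (0:ℝ) lam0 := ⟨le_rfl, hlam0.le⟩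
  have hE0vec : H₀ (ψ 0) = (E 0 : ℂ) • ψ 0 := by
    have := heig 0 h0mem; simpa using this
  have h00 : ⟪ψ 0, ψ 0⟫_ℂ = 1 := hnorm 0 h0mem
  have hψ0H : ∀ x : 𝓗, ⟪ψ 0, H₀ x⟫_ℂ = (E 0 : ℂ) * ⟪ψ 0, x⟫_ℂ := by
    intro x
    rw [← hH₀sym, hE0vec, inner_smul_left, Complex.conj_ofReal]
  have eqE : ∀ lam ∈ Set.Icc (0:ℝ) lam0,
      (E lam : ℂ) = (E 0 : ℂ) + lam * ⟪ψ 0, V (ψ lam)⟫_ℂ := by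
    intro lam hlam
    have h := congrArg (fun z => ⟪ψ 0, z⟫_ℂ) (heig lam hlam)
    simp only [inner_add_right, inner_smul_right, hψ0H, hnorm lam hlam] at h
    linear_combination -h
  have eqk : ∀ k, 1 ≤ k → k ≤ n → Es k = ⟪ψ 0, V (ψs (k-1))⟫_ℂ := by
    intro k h1 h2
    have h := congrArg (fun z => ⟪ψ 0, z⟫_ℂ) (hrec k h1 h2)
    simp only [inner_add_right, inner_sum, inner_smul_right] at h
    rw [hψ0H, horth k h1 h2, mul_zero, zero_add] at h
    rw [Finset.sum_eq_single k (fun j hj hjk => by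
          simp only [Finset.mem_range] at hj
          rw [horth (k - j) (by omega) (by omega), mul_zero])
        (fun hk => absurd (Finset.self_mem_range_succ k) hk)] at h
    rw [Nat.sub_self, hψs0, h00, mul_one] at h
    exact h.symm
  -- Identity (I)
  have hI : ∀ lam ∈ Set.Icc (0:ℝ) lam0,
      (E lam : ℂ) - (∑ k ∈ Finset.range (m+1), Es k * (lam:ℂ)^k)
        = (lam:ℂ) * ⟪ψ 0, V (ψ lam - ∑ k ∈ Finset.range (m+1), (lam:ℂ)^k • ψs k)⟫_ℂ
          + (lam:ℂ)^(m+1) * ⟪ψ 0, V (ψs m)⟫_ℂ := by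
    intro lam hlam
    have hx : ⟪ψ 0, V (ψ lam - ∑ k ∈ Finset.range (m+1), (lam:ℂ)^k • ψs k)⟫_ℂ
        = ⟪ψ 0, V (ψ lam)⟫_ℂ
          - ∑ k ∈ Finset.range (m+1), (lam:ℂ)^k * ⟪ψ 0, V (ψs k)⟫_ℂ := by
      rw [map_sub, map_sum, inner_sub_right, inner_sum]
      simp_rw [map_smul, inner_smul_right]
    have hsum1 : (∑ k ∈ Finset.range (m+1), Es k * (lam:ℂ)^k)
        = (E 0 : ℂ) + ∑ k ∈ Finset.range m, Es (k+1) * (lam:ℂ)^(k+1) := by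
      rw [Finset.sum_range_succ' (fun k => Es k * (lam:ℂ)^k) m]
      simp [hEs0, add_comm]
    have hsum2 : (∑ k ∈ Finset.range (m+1), (lam:ℂ)^k * ⟪ψ 0, V (ψs k)⟫_ℂ)
        = (∑ k ∈ Finset.range m, Es (k+1) * (lam:ℂ)^k)
          + (lam:ℂ)^m * ⟪ψ 0, V (ψs m)⟫_ℂ := by
      rw [Finset.sum_range_succ]
      congr 1
      apply Finset.sum_congr rfl
      intro k hk
      simp only [Finset.mem_range] at hk
      have := eqk (k+1) (by omega) (by omega)
      simp only [Nat.add_sub_cancel] at this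
      rw [← this]; ring
    have hsum3 : (lam:ℂ) * ∑ k ∈ Finset.range m, Es (k+1) * (lam:ℂ)^k
        = ∑ k ∈ Finset.range m, Es (k+1) * (lam:ℂ)^(k+1) := by
      rw [Finset.mul_sum]; apply Finset.sum_congr rfl; intros; ring
    rw [hx, hsum1, hsum2]
    linear_combination eqE lam hlam + hsum3
  -- per-vector pairing identity
  have hEk : ∀ lam ∈ Set.Icc (0:ℝ) lam0, ∀ x : 𝓗,
      ⟪H₀ x, ψ lam⟫_ℂ + (lam:ℂ) * ⟪V x, ψ lam⟫_ℂ = (E lam : ℂ) * ⟪x, ψ lam⟫_ℂ := by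
    intro lam hlam x
    have h := congrArg (fun z => ⟪x, z⟫_ℂ) (heig lam hlam)
    simp only [inner_add_right, inner_smul_right] at h
    rw [← hH₀sym, ← hVsym] at h
    exact h
  have hHk : ∀ k, 1 ≤ k → k ≤ n → ∀ lam : ℝ,
      ⟪H₀ (ψs k), ψ lam⟫_ℂ
        = (∑ j ∈ Finset.range (k+1), conj (Es j) * ⟪ψs (k-j), ψ lam⟫_ℂ)
          - ⟪V (ψs (k-1)), ψ lam⟫_ℂ := by
    intro k h1 h2 lam
    have h := congrArg (fun z => ⟪z, ψ lam⟫_ℂ) (hrec k h1 h2)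
    simp only [inner_add_left, sum_inner, inner_smul_left] at h
    linear_combination h
  have hH0k : ∀ lam : ℝ, ⟪H₀ (ψs 0), ψ lam⟫_ℂ = conj (Es 0) * ⟪ψs 0, ψ lam⟫_ℂ := by
    intro lam
    have hv : H₀ (ψs 0) = Es 0 • ψs 0 := by rw [hψs0, hEs0, hE0vec]
    rw [hv, inner_smul_left]
  -- Identity (II)
  have hII : ∀ lam ∈ Set.Icc (0:ℝ) lam0,
      ((E lam : ℂ) - conj (∑ k ∈ Finset.range (m+1), Es k * (lam:ℂ)^k))
        * (∑ i ∈ Finset.range (m+1), (lam:ℂ)^i * ⟪ψs i, ψ lam⟫_ℂ)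
      = (lam:ℂ)^(m+1) * (⟪V (ψs m), ψ lam⟫_ℂ
          - ∑ j ∈ Finset.range (m+1), ∑ i ∈ Finset.range (m+1),
              (if m+1 ≤ j+i then conj (Es j) * (lam:ℂ)^(j+i-(m+1)) * ⟪ψs i, ψ lam⟫_ℂ
               else 0)) := by
    intro lam hlam
    -- step 1 : sum of the per-k eigen pairings
    have hA : (∑ k ∈ Finset.range (m+1), (lam:ℂ)^k * ⟪H₀ (ψs k), ψ lam⟫_ℂ)
          + (∑ k ∈ Finset.range (m+1), (lam:ℂ)^(k+1) * ⟪V (ψs k), ψ lam⟫_ℂ)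
        = (E lam : ℂ) * ∑ i ∈ Finset.range (m+1), (lam:ℂ)^i * ⟪ψs i, ψ lam⟫_ℂ := by
      rw [Finset.mul_sum, ← Finset.sum_add_distrib]
      apply Finset.sum_congr rfl
      intro k _
      linear_combination ((lam:ℂ)^k) * hEk lam hlam (ψs k)
    -- step 2 : expand the H₀ pairings via the recursion
    have hB : (∑ k ∈ Finset.range (m+1), (lam:ℂ)^k * ⟪H₀ (ψs k), ψ lam⟫_ℂ)
        = (∑ k ∈ Finset.range (m+1), (lam:ℂ)^k *
              ∑ j ∈ Finset.range (k+1), conj (Es j) * ⟪ψs (k-j), ψ lam⟫_ℂ)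
          - ∑ k ∈ Finset.range m, (lam:ℂ)^(k+1) * ⟪V (ψs k), ψ lam⟫_ℂ := by
      rw [Finset.sum_range_succ' (fun k => (lam:ℂ)^k * ⟪H₀ (ψs k), ψ lam⟫_ℂ) m]
      rw [Finset.sum_range_succ' (fun k => (lam:ℂ)^k *
            ∑ j ∈ Finset.range (k+1), conj (Es j) * ⟪ψs (k-j), ψ lam⟫_ℂ) m]
      have hmain : (∑ k ∈ Finset.range m, (lam:ℂ)^(k+1) * ⟪H₀ (ψs (k+1)), ψ lam⟫_ℂ)
          = (∑ k ∈ Finset.range m, (lam:ℂ)^(k+1) *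
                ∑ j ∈ Finset.range (k+1+1), conj (Es j) * ⟪ψs (k+1-j), ψ lam⟫_ℂ)
            - ∑ k ∈ Finset.range m, (lam:ℂ)^(k+1) * ⟪V (ψs k), ψ lam⟫_ℂ := by
        rw [← Finset.sum_sub_distrib]
        apply Finset.sum_congr rfl
        intro k hk
        simp only [Finset.mem_range] at hk
        have h := hHk (k+1) (by omega) (by omega) lam
        simp only [Nat.add_sub_cancel] at h
        linear_combination ((lam:ℂ)^(k+1)) * h
      rw [hmain, hH0k lam]
      norm_num [Finset.sum_range_one]
      ring
    -- step 3 : telescoping of the V sums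
    have hC : (∑ k ∈ Finset.range (m+1), (lam:ℂ)^(k+1) * ⟪V (ψs k), ψ lam⟫_ℂ)
        = (∑ k ∈ Finset.range m, (lam:ℂ)^(k+1) * ⟪V (ψs k), ψ lam⟫_ℂ)
          + (lam:ℂ)^(m+1) * ⟪V (ψs m), ψ lam⟫_ℂ :=
      Finset.sum_range_succ _ m
    -- step 4 : triangle rearrangement
    have hD : (∑ k ∈ Finset.range (m+1), (lam:ℂ)^k *
            ∑ j ∈ Finset.range (k+1), conj (Es j) * ⟪ψs (k-j), ψ lam⟫_ℂ)
        = ∑ j ∈ Finset.range (m+1), ∑ i ∈ Finset.range (m+1),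
            (if j + i ≤ m then conj (Es j) * ((lam:ℂ)^(j+i) * ⟪ψs i, ψ lam⟫_ℂ)
             else 0) := by
      rw [← sum_triangle' m (fun j i => conj (Es j) * ((lam:ℂ)^(j+i) * ⟪ψs i, ψ lam⟫_ℂ))]
      apply Finset.sum_congr rfl
      intro k _
      rw [Finset.mul_sum]
      apply Finset.sum_congr rfl
      intro j hj
      simp only [Finset.mem_range] at hj
      rw [Nat.add_sub_cancel' (by omega : j ≤ k)]
      ring
    -- step 5 : the full square
    have hP : conj (∑ k ∈ Finset.range (m+1), Es k * (lam:ℂ)^k)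
        = ∑ j ∈ Finset.range (m+1), conj (Es j) * (lam:ℂ)^j := by
      rw [map_sum]
      apply Finset.sum_congr rfl
      intro j _
      rw [map_mul, map_pow, Complex.conj_ofReal]
    have hE : conj (∑ k ∈ Finset.range (m+1), Es k * (lam:ℂ)^k)
          * (∑ i ∈ Finset.range (m+1), (lam:ℂ)^i * ⟪ψs i, ψ lam⟫_ℂ)
        = ∑ j ∈ Finset.range (m+1), ∑ i ∈ Finset.range (m+1),
            conj (Es j) * ((lam:ℂ)^(j+i) * ⟪ψs i, ψ lam⟫_ℂ) := by
      rw [hP, Finset.sum_mul_sum]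
      apply Finset.sum_congr rfl
      intro j _
      apply Finset.sum_congr rfl
      intro i _
      rw [pow_add]
      ring
    -- step 6/7 : split the square into triangle + remainder
    have hF : (∑ j ∈ Finset.range (m+1), ∑ i ∈ Finset.range (m+1),
            conj (Es j) * ((lam:ℂ)^(j+i) * ⟪ψs i, ψ lam⟫_ℂ))
        = (∑ j ∈ Finset.range (m+1), ∑ i ∈ Finset.range (m+1),
            (if j + i ≤ m then conj (Es j) * ((lam:ℂ)^(j+i) * ⟪ψs i, ψ lam⟫_ℂ)
             else 0))
          + (lam:ℂ)^(m+1) *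
            ∑ j ∈ Finset.range (m+1), ∑ i ∈ Finset.range (m+1),
              (if m+1 ≤ j+i then conj (Es j) * (lam:ℂ)^(j+i-(m+1)) * ⟪ψs i, ψ lam⟫_ℂ
               else 0) := by
      rw [Finset.mul_sum]
      simp_rw [Finset.mul_sum]
      rw [← Finset.sum_add_distrib]
      apply Finset.sum_congr rfl
      intro j _
      rw [← Finset.sum_add_distrib]
      apply Finset.sum_congr rfl
      intro i _
      by_cases h : j + i ≤ m
      · rw [if_pos h, if_neg (by omega), mul_zero, add_zero]
      · rw [if_neg h, if_pos (by omega), zero_add]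
        have hp : (lam:ℂ)^(j+i) = (lam:ℂ)^(m+1) * (lam:ℂ)^(j+i-(m+1)) := by
          rw [← pow_add]
          congr 1
          omega
        rw [hp]
        ring
    linear_combination -hA + hB + hC + hD - hE - hF
  -- limits
  have hwlim : ∀ i : ℕ, Tendsto (fun lam : ℝ => ⟪ψs i, ψ lam⟫_ℂ)
      (nhdsWithin 0 (Set.Ioi 0)) (nhds ⟪ψs i, ψ 0⟫_ℂ) := by
    intro i
    exact Tendsto.inner tendsto_const_nhds hψcont
  have hplim : ∀ p : ℕ, Tendsto (fun lam : ℝ => ((lam:ℂ))^p)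
      (nhdsWithin 0 (Set.Ioi 0)) (nhds ((0:ℂ)^p)) := by
    intro p
    have h : Tendsto (fun lam : ℝ => (lam:ℂ)) (nhdsWithin 0 (Set.Ioi 0)) (nhds (0:ℂ)) := by
      have h0 := (Complex.continuous_ofReal.tendsto 0).mono_left
        (nhdsWithin_le_nhds (s := Set.Ioi (0:ℝ)))
      simpa using h0
    exact h.pow p
  have horth' : ∀ i, 1 ≤ i → i ≤ n → ⟪ψs i, ψ 0⟫_ℂ = 0 := by
    intro i h1 h2
    rw [← inner_conj_symm, horth i h1 h2, map_zero]
  have hGlim : Tendsto (fun lam : ℝ => ∑ i ∈ Finset.range (m+1),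
        (lam:ℂ)^i * ⟪ψs i, ψ lam⟫_ℂ) (nhdsWithin 0 (Set.Ioi 0)) (nhds 1) := by
    have h1 : Tendsto (fun lam : ℝ => ∑ i ∈ Finset.range (m+1),
          (lam:ℂ)^i * ⟪ψs i, ψ lam⟫_ℂ) (nhdsWithin 0 (Set.Ioi 0))
        (nhds (∑ i ∈ Finset.range (m+1), (0:ℂ)^i * ⟪ψs i, ψ 0⟫_ℂ)) :=
      tendsto_finset_sum _ (fun i _ => (hplim i).mul (hwlim i))
    have h2 : (∑ i ∈ Finset.range (m+1), (0:ℂ)^i * ⟪ψs i, ψ 0⟫_ℂ) = 1 := by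
      rw [Finset.sum_eq_single 0 (fun i _ hi => by
            rw [zero_pow hi, zero_mul])
          (fun h => absurd (Finset.mem_range.mpr (by omega)) h)]
      rw [pow_zero, one_mul, hψs0, h00]
    rwa [h2] at h1
  have hWlim : Tendsto (fun lam : ℝ => ∑ j ∈ Finset.range (m+1), ∑ i ∈ Finset.range (m+1),
        (if m+1 ≤ j+i then conj (Es j) * (lam:ℂ)^(j+i-(m+1)) * ⟪ψs i, ψ lam⟫_ℂ else 0))
      (nhdsWithin 0 (Set.Ioi 0)) (nhds 0) := by
    have h1 : Tendsto (fun lam : ℝ => ∑ j ∈ Finset.range (m+1), ∑ i ∈ Finset.range (m+1),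
          (if m+1 ≤ j+i then conj (Es j) * (lam:ℂ)^(j+i-(m+1)) * ⟪ψs i, ψ lam⟫_ℂ else 0))
        (nhdsWithin 0 (Set.Ioi 0))
        (nhds (∑ j ∈ Finset.range (m+1), ∑ i ∈ Finset.range (m+1),
          (if m+1 ≤ j+i then conj (Es j) * (0:ℂ)^(j+i-(m+1)) * ⟪ψs i, ψ 0⟫_ℂ else 0))) := by
      apply tendsto_finset_sum
      intro j _
      apply tendsto_finset_sum
      intro i _
      by_cases h : m+1 ≤ j+i
      · simp only [if_pos h]
        exact (tendsto_const_nhds.mul (hplim _)).mul (hwlim i)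
      · simp only [if_neg h]
        exact tendsto_const_nhds
    have h2 : (∑ j ∈ Finset.range (m+1), ∑ i ∈ Finset.range (m+1),
        (if m+1 ≤ j+i then conj (Es j) * (0:ℂ)^(j+i-(m+1)) * ⟪ψs i, ψ 0⟫_ℂ else 0)) = 0 := by
      apply Finset.sum_eq_zero
      intro j hj
      apply Finset.sum_eq_zero
      intro i hi
      simp only [Finset.mem_range] at hj hi
      by_cases h : m+1 ≤ j+i
      · rw [if_pos h, horth' i (by omega) (by omega), mul_zero]
      · rw [if_neg h]
    rwa [h2] at h1
  have hulim : Tendsto (fun lam : ℝ => ⟪V (ψs m), ψ lam⟫_ℂ)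
      (nhdsWithin 0 (Set.Ioi 0)) (nhds (conj ⟪ψ 0, V (ψs m)⟫_ℂ)) := by
    have h : Tendsto (fun lam : ℝ => ⟪V (ψs m), ψ lam⟫_ℂ)
        (nhdsWithin 0 (Set.Ioi 0)) (nhds ⟪V (ψs m), ψ 0⟫_ℂ) :=
      Tendsto.inner tendsto_const_nhds hψcont
    rwa [← inner_conj_symm] at h
  -- eventually facts
  have hIcc : ∀ᶠ lam : ℝ in nhdsWithin 0 (Set.Ioi 0), lam ∈ Set.Icc (0:ℝ) lam0 := by
    filter_upwards [self_mem_nhdsWithin,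
      eventually_nhdsWithin_of_eventually_nhds
        (Filter.Tendsto.eventually_le_const hlam0 (tendsto_id (α := ℝ)) |>.mono (fun x hx => hx))]
      with lam h1 h2
    exact ⟨le_of_lt h1, h2⟩
  have hGne : ∀ᶠ lam : ℝ in nhdsWithin 0 (Set.Ioi 0),
      (∑ i ∈ Finset.range (m+1), (lam:ℂ)^i * ⟪ψs i, ψ lam⟫_ℂ) ≠ 0 :=
    hGlim.eventually_ne one_ne_zero
  -- key limit for the conjugated difference
  have hQ : Tendsto (fun lam : ℝ => ((lam:ℂ)^(m+1))⁻¹ *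
        ((E lam : ℂ) - conj (∑ k ∈ Finset.range (m+1), Es k * (lam:ℂ)^k)))
      (nhdsWithin 0 (Set.Ioi 0)) (nhds (conj ⟪ψ 0, V (ψs m)⟫_ℂ)) := by
    have hlim : Tendsto (fun lam : ℝ =>
          (⟪V (ψs m), ψ lam⟫_ℂ - ∑ j ∈ Finset.range (m+1), ∑ i ∈ Finset.range (m+1),
            (if m+1 ≤ j+i then conj (Es j) * (lam:ℂ)^(j+i-(m+1)) * ⟪ψs i, ψ lam⟫_ℂ else 0))
          / (∑ i ∈ Finset.range (m+1), (lam:ℂ)^i * ⟪ψs i, ψ lam⟫_ℂ))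
        (nhdsWithin 0 (Set.Ioi 0)) (nhds (conj ⟪ψ 0, V (ψs m)⟫_ℂ)) := by
      have := (hulim.sub hWlim).div hGlim one_ne_zero
      simpa [Pi.div_def] using this
    apply hlim.congr'
    filter_upwards [hIcc, hGne, self_mem_nhdsWithin] with lam hlam hG hpos
    have hl0 : (lam:ℂ) ≠ 0 := by
      simp only [ne_eq, Complex.ofReal_eq_zero]
      exact ne_of_gt hpos
    have hpow : ((lam:ℂ))^(m+1) ≠ 0 := pow_ne_zero _ hl0
    rw [div_eq_iff hG, inv_mul_eq_div, div_mul_eq_mul_div, eq_comm, div_eq_iff hpow]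
    linear_combination hII lam hlam
  have hKey : Tendsto (fun lam : ℝ => ((lam:ℂ)^(m+1))⁻¹ *
        ((E lam : ℂ) - ∑ k ∈ Finset.range (m+1), Es k * (lam:ℂ)^k))
      (nhdsWithin 0 (Set.Ioi 0)) (nhds ⟪ψ 0, V (ψs m)⟫_ℂ) := by
    have hconj := (Complex.continuous_conj.tendsto _).comp hQ
    have heq : (fun lam : ℝ => conj (((lam:ℂ)^(m+1))⁻¹ *
          ((E lam : ℂ) - conj (∑ k ∈ Finset.range (m+1), Es k * (lam:ℂ)^k))))
        = (fun lam : ℝ => ((lam:ℂ)^(m+1))⁻¹ *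
          ((E lam : ℂ) - ∑ k ∈ Finset.range (m+1), Es k * (lam:ℂ)^k)) := by
      funext lam
      rw [map_mul, map_sub, Complex.conj_conj, map_inv₀, map_pow, Complex.conj_ofReal,
        Complex.conj_ofReal]
    rw [Complex.conj_conj] at hconj
    exact heq ▸ hconj
  constructor
  · -- first limit
    have h1 : Tendsto (fun lam : ℝ => (lam:ℂ) * (((lam:ℂ)^(m+1))⁻¹ *
          ((E lam : ℂ) - ∑ k ∈ Finset.range (m+1), Es k * (lam:ℂ)^k)))
        (nhdsWithin 0 (Set.Ioi 0)) (nhds ((0:ℂ) * ⟪ψ 0, V (ψs m)⟫_ℂ)) := by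
      have hl : Tendsto (fun lam : ℝ => (lam:ℂ)) (nhdsWithin 0 (Set.Ioi 0)) (nhds (0:ℂ)) := by
        have h0 := (Complex.continuous_ofReal.tendsto 0).mono_left
          (nhdsWithin_le_nhds (s := Set.Ioi (0:ℝ)))
        simpa using h0
      exact hl.mul hKey
    rw [zero_mul] at h1
    apply h1.congr'
    filter_upwards [self_mem_nhdsWithin] with lam hpos
    have hl0 : (lam:ℂ) ≠ 0 := by
      simp only [ne_eq, Complex.ofReal_eq_zero]; exact ne_of_gt hpos
    have e1 : ((lam:ℂ)^(m+1))⁻¹ * (lam:ℂ) = ((lam:ℂ)^m)⁻¹ := by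
      rw [pow_succ, mul_inv, mul_assoc, inv_mul_cancel₀ hl0, mul_one]
    linear_combination ((E lam : ℂ) - ∑ k ∈ Finset.range (m + 1), Es k * (lam:ℂ)^k) * e1
  · -- second limit
    have h1 : Tendsto (fun lam : ℝ => ((lam:ℂ)^(m+1))⁻¹ *
          ((E lam : ℂ) - ∑ k ∈ Finset.range (m+1), Es k * (lam:ℂ)^k)
          - ⟪ψ 0, V (ψs m)⟫_ℂ)
        (nhdsWithin 0 (Set.Ioi 0)) (nhds 0) := by
      have := hKey.sub (tendsto_const_nhds (x := ⟪ψ 0, V (ψs m)⟫_ℂ))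
      simpa using this
    apply h1.congr'
    filter_upwards [hIcc, self_mem_nhdsWithin] with lam hlam hpos
    have hl0 : (lam:ℂ) ≠ 0 := by
      simp only [ne_eq, Complex.ofReal_eq_zero]; exact ne_of_gt hpos
    have hpow : ((lam:ℂ))^(m+1) ≠ 0 := pow_ne_zero _ hl0
    have h2 := hI lam hlam
    have e1 : ((lam:ℂ)^(m+1))⁻¹ * (lam:ℂ) = ((lam:ℂ)^m)⁻¹ := by
      rw [pow_succ, mul_inv, mul_assoc, inv_mul_cancel₀ hl0, mul_one]
    have e2 : ((lam:ℂ)^(m+1))⁻¹ * (lam:ℂ)^(m+1) = 1 := inv_mul_cancel₀ hpow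
    linear_combination (((lam:ℂ)^(m+1))⁻¹) * h2
      + ⟪ψ 0, V (ψ lam - ∑ k ∈ Finset.range (m+1), (lam:ℂ)^k • ψs k)⟫_ℂ * e1
      + ⟪ψ 0, V (ψs m)⟫_ℂ * e2
end

section
/- Let n ∈ ℕ. Suppose ψ₁, …, ψₙ ∈ 𝓗 satisfy ⟨ψ₀, ψⱼ⟩ = 0 for 1 ≤ j ≤ n, and E₁, …, Eₙ ∈ ℂ are such that for all m with 1 ≤ m ≤ n one has H₀ψₘ + Vψₘ₋₁ = Σ_{k=0}^{m} E_k ψ_{m−k} (index 0 referring to ψ₀ and E₀). Define E_{n+1} := ⟨ψ₀, Vψₙ⟩, and suppose φ ∈ 𝓗 satisfies ⟨ψ₀, φ⟩ = 0 and (H₀ − E₀)φ = P̄₀( Σ_{k=1}^{n+1} E_k ψ_{n+1−k} − Vψₙ ), where P̄₀x := x − ⟨ψ₀, x⟩ψ₀. Then, setting ψ_{n+1} := φ, the recursion also holds at order n+1, i.e. H₀ψ_{n+1} + Vψₙ = Σ_{k=0}^{n+1} E_k ψ_{n+1−k}. -/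
open scoped InnerProductSpace

/-- **Inductive formula (Lemma 3.3).**
Suppose `ψ₁,…,ψₙ ⟂ ψ₀` and `E₁,…,Eₙ` satisfy the recursion
`H₀ψₘ + Vψₘ₋₁ = ∑_{k=0}^m E_k ψ_{m-k}` for `1 ≤ m ≤ n` (index `0` referring to
the normalized eigenvector `ψ₀` of `H₀` with eigenvalue `E₀`).  Define
`E_{n+1} := ⟨ψ₀, Vψₙ⟩` and suppose `φ ⟂ ψ₀` satisfies
`(H₀ - E₀)φ = P̄₀(∑_{k=1}^{n+1} E_k ψ_{n+1-k} - Vψₙ)`, where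
`P̄₀x = x - ⟨ψ₀,x⟩ψ₀`.  Then, setting `ψ_{n+1} := φ`, the recursion also holds
at order `n + 1`. -/
theorem stmt2
    {𝓗 : Type*} [NormedAddCommGroup 𝓗] [InnerProductSpace ℂ 𝓗] [CompleteSpace 𝓗]
    (H₀ V : 𝓗 →ₗ[ℂ] 𝓗)
    (hH₀sym : ∀ x y : 𝓗, ⟪H₀ x, y⟫_ℂ = ⟪x, H₀ y⟫_ℂ)
    (hVsym : ∀ x y : 𝓗, ⟪V x, y⟫_ℂ = ⟪x, V y⟫_ℂ)
    (E₀ : ℝ) (ψ₀ : 𝓗) (hψ₀norm : ‖ψ₀‖ = 1)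
    (heig : H₀ ψ₀ = (E₀ : ℂ) • ψ₀)
    (n : ℕ) (ψs : ℕ → 𝓗) (Es : ℕ → ℂ)
    (hψs0 : ψs 0 = ψ₀) (hEs0 : Es 0 = (E₀ : ℂ))
    (horth : ∀ j, 1 ≤ j → j ≤ n → ⟪ψ₀, ψs j⟫_ℂ = 0)
    (hrec : ∀ m, 1 ≤ m → m ≤ n →
      H₀ (ψs m) + V (ψs (m - 1)) = ∑ k ∈ Finset.range (m + 1), Es k • ψs (m - k))
    (hEnext : Es (n + 1) = ⟪ψ₀, V (ψs n)⟫_ℂ)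
    (φ : 𝓗) (hφorth : ⟪ψ₀, φ⟫_ℂ = 0)
    (hφ : H₀ φ - (E₀ : ℂ) • φ =
      (fun x : 𝓗 => x - ⟪ψ₀, x⟫_ℂ • ψ₀)
        ((∑ k ∈ Finset.Icc 1 (n + 1), Es k • ψs (n + 1 - k)) - V (ψs n)))
    (hψnext : ψs (n + 1) = φ) :
    H₀ (ψs (n + 1)) + V (ψs n) =
      ∑ k ∈ Finset.range (n + 2), Es k • ψs (n + 1 - k) := by

  have hψ₀inner : ⟪ψ₀, ψ₀⟫_ℂ = 1 := by
    rw [inner_self_eq_norm_sq_to_K, hψ₀norm]; norm_num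
  have hsum : ⟪ψ₀, ∑ k ∈ Finset.Icc 1 (n + 1), Es k • ψs (n + 1 - k)⟫_ℂ = Es (n + 1) := by
    rw [inner_sum, Finset.sum_eq_single (n + 1)]
    · simp [inner_smul_right, hψs0, hψ₀inner, hψ₀norm]
    · intro k hk hne
      rw [Finset.mem_Icc] at hk
      rw [inner_smul_right, horth (n + 1 - k) (by omega) (by omega), mul_zero]
    · intro h; exact absurd (Finset.mem_Icc.mpr (by omega)) h
  simp only at hφ
  rw [inner_sub_right, hsum, ← hEnext, sub_self, zero_smul, sub_zero] at hφ
  have h2 := sub_eq_iff_eq_add.mp hφ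
  have hsplit : Finset.range (n + 2) = insert 0 (Finset.Icc 1 (n + 1)) := by
    ext k; simp [Finset.mem_range, Finset.mem_Icc]; omega
  rw [hsplit, Finset.sum_insert (by simp), hψnext, h2]
  simp only [Nat.sub_zero, hEs0, hψnext]
  abel
end

section
/- Let n ∈ ℕ and suppose E₁, …, Eₙ ∈ ℂ and ψ₁, …, ψₙ ∈ 𝓗 are given by the following direct formulas: E₁ = ⟨ψ₀, Vψ₀⟩; for all 2 ≤ m ≤ n, E_m = − Σ_{k=2}^{m} Σ_{j₁+⋯+j_k=m, jₛ ≥ 1} ⟨ψ₀, (E_{j₁} − δ_{1,j₁}V) ∏_{s=2}^{k} [ R (E_{jₛ} − δ_{1,jₛ}V) ] ψ₀⟩; and for all 1 ≤ m ≤ n, ψ_m = Σ_{k=1}^{m} Σ_{j₁+⋯+j_k=m, jₛ ≥ 1} ∏_{s=1}^{k} [ R (E_{jₛ} − δ_{1,jₛ}V) ] ψ₀. Here δ_{1,j} = 1 if j = 1 and 0 otherwise, scalars act as multiples of the identity, and the operator products are taken in the indicated left-to-right order. Then for all m with 1 ≤ m ≤ n one has H₀ψₘ + Vψₘ₋₁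 = Σ_{k=0}^{m} E_k ψ_{m−k} (index 0 referring to ψ₀ and E₀). -/
open scoped InnerProductSpace
open Finset


open Finset

namespace Stmt3Aux

/-- Compositions of `a` into `k` parts (entries `≥ 1`, sum `a`), with entries drawn
from `Icc 1 a` as in the statement. -/
def C (a k : ℕ) : Finset (Fin k → ℕ) :=
  (Fintype.piFinset fun _ : Fin k => Finset.Icc 1 a).filter (fun j => ∑ s, j s = a)

lemma mem_C {a k : ℕ} {j : Fin k → ℕ} : j ∈ C a k ↔ (∀ s, 1 ≤ j s) ∧ ∑ s, j s = a := by
  constructor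
  · intro h
    simp only [C, Finset.mem_filter, Fintype.mem_piFinset, Finset.mem_Icc] at h
    exact ⟨fun s => (h.1 s).1, h.2⟩
  · rintro ⟨h1, h2⟩
    simp only [C, Finset.mem_filter, Fintype.mem_piFinset, Finset.mem_Icc]
    refine ⟨fun s => ⟨h1 s, ?_⟩, h2⟩
    calc j s ≤ ∑ t, j t := Finset.single_le_sum (fun _ _ => Nat.zero_le _) (Finset.mem_univ s)
      _ = a := h2

lemma C_eq_empty {a k : ℕ} (ha : 1 ≤ a) (h : k ∉ Finset.Icc 1 a) : C a k = ∅ := by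
  rw [Finset.eq_empty_iff_forall_notMem]
  intro j hj
  rw [mem_C] at hj
  apply h
  rw [Finset.mem_Icc]
  constructor
  · rcases Nat.eq_zero_or_pos k with hk | hk
    · subst hk; simp at hj; omega
    · exact hk
  · calc k = ∑ _s : Fin k, 1 := by simp
      _ ≤ ∑ s, j s := Finset.sum_le_sum fun s _ => hj.1 s
      _ = a := hj.2

lemma C_zero_succ (k : ℕ) : C 0 (k + 1) = ∅ := by
  rw [Finset.eq_empty_iff_forall_notMem]
  intro j hj
  rw [mem_C] at hj
  have h1 := hj.1 0
  have h2 : j 0 ≤ ∑ s, j s :=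
    Finset.single_le_sum (fun _ _ => Nat.zero_le _) (Finset.mem_univ 0)
  omega

lemma C_zero_zero : C 0 0 = {fun s => s.elim0} := by
  ext j
  simp only [mem_C, Finset.mem_singleton]
  constructor
  · intro _; funext s; exact s.elim0
  · intro h; exact ⟨fun s => s.elim0, by simp⟩

lemma C_one {m : ℕ} (hm : 1 ≤ m) : C m 1 = {fun _ => m} := by
  ext j
  simp only [mem_C, Finset.mem_singleton, Fin.sum_univ_one]
  constructor
  · rintro ⟨-, h2⟩; funext s; rw [Fin.eq_zero s]; exact h2
  · rintro rfl; exact ⟨fun s => hm, rfl⟩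

lemma sum_C_succ {M : Type*} [AddCommMonoid M] (m k : ℕ) (f : (Fin (k + 1) → ℕ) → M) :
    ∑ j ∈ C m (k + 1), f j
      = ∑ l ∈ Finset.Icc 1 m, ∑ j' ∈ C (m - l) k, f (Fin.cons l j') := by
  rw [Finset.sum_sigma' (Finset.Icc 1 m) (fun l => C (m - l) k)
    (fun l j' => f (Fin.cons l j'))]
  refine Finset.sum_nbij' (fun j => ⟨j 0, Fin.tail j⟩)
    (fun p => Fin.cons p.1 p.2) ?_ ?_ ?_ ?_ ?_
  · intro j hj
    rw [mem_C] at hj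
    obtain ⟨h1, h2⟩ := hj
    rw [Fin.sum_univ_succ] at h2
    have hle : j 0 ≤ m := le_of_le_of_eq (Nat.le_add_right _ _) h2
    simp only [Finset.mem_sigma, Finset.mem_Icc]
    refine ⟨⟨h1 0, hle⟩, ?_⟩
    rw [mem_C]
    exact ⟨fun s => h1 s.succ, by unfold Fin.tail; omega⟩
  · rintro ⟨l, j'⟩ hp
    simp only [Finset.mem_sigma, Finset.mem_Icc] at hp
    obtain ⟨⟨hl1, hlm⟩, hj'⟩ := hp
    rw [mem_C] at hj' ⊢
    constructor
    · intro s
      refine Fin.cases ?_ ?_ s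
      · simpa using hl1
      · intro i; simpa using hj'.1 i
    · rw [Fin.sum_univ_succ]
      simp only [Fin.cons_zero, Fin.cons_succ]
      rw [hj'.2]; omega
  · intro j _; exact Fin.cons_self_tail j
  · rintro ⟨l, j'⟩ _
    simp [Fin.tail_cons]
  · intro j _
    rw [Fin.cons_self_tail]

end Stmt3Aux

namespace Stmt3Aux

variable {M : Type*} [AddCommGroup M] [Module ℂ M]

/-- The direct-formula vector built from operators `G`, with `Ψ G v 0 = v`. -/
def Psi (G : ℕ → Module.End ℂ M) (v : M) (a : ℕ) : M :=
  if a = 0 then v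
  else ∑ k ∈ Finset.Icc 1 a, ∑ j ∈ C a k, (List.ofFn fun s : Fin k => G (j s)).prod v

lemma sum_Icc_one (m : ℕ) (F : ℕ → M) :
    ∑ k ∈ Finset.Icc 1 m, F k = ∑ k ∈ Finset.range m, F (k + 1) := by
  rw [← Finset.Ico_add_one_right_eq_Icc, Finset.sum_Ico_eq_sum_range]
  exact Finset.sum_congr (by norm_num) fun i _ => by rw [Nat.add_comm]

lemma psi_eq (G : ℕ → Module.End ℂ M) (v : M) {a m : ℕ} (ham : a < m) :
    ∑ k ∈ Finset.range m, ∑ j ∈ C a k, (List.ofFn fun s : Fin k => G (j s)).prod v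
      = Psi G v a := by
  rcases Nat.eq_zero_or_pos a with ha | ha
  · subst ha
    rw [Psi, if_pos rfl]
    rw [Finset.sum_eq_single_of_mem 0 (Finset.mem_range.mpr (by omega))]
    · simp [C_zero_zero]
    · intro k _ hk
      obtain ⟨k', rfl⟩ := Nat.exists_eq_succ_of_ne_zero hk
      rw [C_zero_succ, Finset.sum_empty]
  · rw [Psi, if_neg (by omega)]
    refine (Finset.sum_subset ?_ ?_).symm
    · intro x hx
      rw [Finset.mem_Icc] at hx
      rw [Finset.mem_range]; omega
    · intro x _ hx
      rw [C_eq_empty ha hx, Finset.sum_empty]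

lemma split (G₁ G : ℕ → Module.End ℂ M) (v : M) (m : ℕ) (hm : 1 ≤ m) :
    ∑ k ∈ Finset.Icc 1 m, ∑ j ∈ C m k,
        (List.ofFn fun s : Fin k =>
          if (s : ℕ) = 0 then G₁ (j s) else G (j s)).prod v
      = ∑ l ∈ Finset.Icc 1 m, G₁ l (Psi G v (m - l)) := by
  rw [sum_Icc_one]
  have step2 : ∀ k : ℕ, ∑ j ∈ C m (k + 1),
      (List.ofFn fun s : Fin (k + 1) =>
          if (s : ℕ) = 0 then G₁ (j s) else G (j s)).prod v
      = ∑ l ∈ Finset.Icc 1 m, ∑ j' ∈ C (m - l) k,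
          G₁ l ((List.ofFn fun s : Fin k => G (j' s)).prod v) := by
    intro k
    have : ∀ j : Fin (k + 1) → ℕ,
        (List.ofFn fun s : Fin (k + 1) =>
          if (s : ℕ) = 0 then G₁ (j s) else G (j s)).prod v
        = G₁ (j 0) ((List.ofFn fun i : Fin k => G (Fin.tail j i)).prod v) := by
      intro j
      rw [List.ofFn_succ, List.prod_cons]
      simp only [Fin.val_zero, if_pos rfl, Fin.val_succ, Nat.succ_ne_zero, if_neg,
        Nat.add_one_ne_zero, Module.End.mul_apply]
      rfl
    simp only [this]
    rw [sum_C_succ m k (fun j => G₁ (j 0) ((List.ofFn fun i : Fin k => G (Fin.tail j i)).prod v))]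
    refine Finset.sum_congr rfl fun l _ => Finset.sum_congr rfl fun j' _ => ?_
    simp [Fin.tail_cons]
  simp only [step2]
  rw [Finset.sum_comm]
  refine Finset.sum_congr rfl fun l hl => ?_
  rw [Finset.mem_Icc] at hl
  rw [← psi_eq G v (show m - l < m by omega)]
  rw [map_sum]
  exact Finset.sum_congr rfl fun k _ => (map_sum _ _ _).symm

end Stmt3Aux

/-- **Direct formula (Lemma 3.4).**
`R` is a reduced resolvent for `(H₀, E₀, ψ₀)`.  Suppose `E₁,…,Eₙ` and
`ψ₁,…,ψₙ` are given by the direct formulas: `E₁ = ⟨ψ₀, Vψ₀⟩`,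
`E_m = -∑_{k=2}^m ∑_{j₁+⋯+j_k=m, jₛ≥1} ⟨ψ₀, (E_{j₁} - δ_{1j₁}V)
∏_{s=2}^k [R(E_{jₛ} - δ_{1jₛ}V)] ψ₀⟩` for `2 ≤ m ≤ n`, and
`ψ_m = ∑_{k=1}^m ∑_{j₁+⋯+j_k=m, jₛ≥1} ∏_{s=1}^k [R(E_{jₛ} - δ_{1jₛ}V)] ψ₀`
for `1 ≤ m ≤ n`.  Then the recursion
`H₀ψₘ + Vψₘ₋₁ = ∑_{k=0}^m E_k ψ_{m-k}` holds for all `1 ≤ m ≤ n`. -/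
theorem stmt3
    {𝓗 : Type*} [NormedAddCommGroup 𝓗] [InnerProductSpace ℂ 𝓗] [CompleteSpace 𝓗]
    (H₀ V R : Module.End ℂ 𝓗)
    (hH₀sym : ∀ x y : 𝓗, ⟪H₀ x, y⟫_ℂ = ⟪x, H₀ y⟫_ℂ)
    (hVsym : ∀ x y : 𝓗, ⟪V x, y⟫_ℂ = ⟪x, V y⟫_ℂ)
    (E₀ : ℝ) (ψ₀ : 𝓗) (hψ₀norm : ‖ψ₀‖ = 1)
    (heig : H₀ ψ₀ = (E₀ : ℂ) • ψ₀)
    -- `R` is a reduced resolvent for `(H₀, E₀, ψ₀)`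
    (hR1 : ∀ x : 𝓗, ⟪ψ₀, R x⟫_ℂ = 0)
    (hR2 : ∀ x : 𝓗, H₀ (R x) - (E₀ : ℂ) • R x = x - ⟪ψ₀, x⟫_ℂ • ψ₀)
    (hR3 : ∀ x : 𝓗, R (H₀ x - (E₀ : ℂ) • x) = x - ⟪ψ₀, x⟫_ℂ • ψ₀)
    (n : ℕ) (ψs : ℕ → 𝓗) (Es : ℕ → ℂ)
    (hψs0 : ψs 0 = ψ₀) (hEs0 : Es 0 = (E₀ : ℂ))
    (hE1 : Es 1 = ⟪ψ₀, V ψ₀⟫_ℂ)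
    (hEm : ∀ m, 2 ≤ m → m ≤ n → Es m =
      - ∑ k ∈ Finset.Icc 2 m,
          ∑ j ∈ (Fintype.piFinset fun _ : Fin k => Finset.Icc 1 m).filter
              (fun j => ∑ s, j s = m),
            ⟪ψ₀, ((List.ofFn fun s : Fin k =>
                (if (s : ℕ) = 0 then (1 : Module.End ℂ 𝓗) else R) *
                  (Es (j s) • (1 : Module.End ℂ 𝓗) -
                    if j s = 1 then V else 0)).prod) ψ₀⟫_ℂ)
    (hψm : ∀ m, 1 ≤ m → m ≤ n → ψs m =
      ∑ k ∈ Finset.Icc 1 m,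
        ∑ j ∈ (Fintype.piFinset fun _ : Fin k => Finset.Icc 1 m).filter
            (fun j => ∑ s, j s = m),
          ((List.ofFn fun s : Fin k =>
              R * (Es (j s) • (1 : Module.End ℂ 𝓗) -
                if j s = 1 then V else 0)).prod) ψ₀) :
    ∀ m, 1 ≤ m → m ≤ n →
      H₀ (ψs m) + V (ψs (m - 1)) = ∑ k ∈ Finset.range (m + 1), Es k • ψs (m - k) := by
  intro m hm1 hmn
  have hnorm : ⟪ψ₀, ψ₀⟫_ℂ = 1 := by
    rw [inner_self_eq_norm_sq_to_K, hψ₀norm]; norm_num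
  -- the operators appearing in the formulas
  -- G l = R * A l,  A l = Es l • 1 - δ_{l,1} V
  have hPsi : ∀ a, a ≤ n →
      Stmt3Aux.Psi (fun l => R * (Es l • (1 : Module.End ℂ 𝓗) -
        if l = 1 then V else 0)) ψ₀ a = ψs a := by
    intro a han
    rcases Nat.eq_zero_or_pos a with h0 | h1
    · subst h0
      rw [Stmt3Aux.Psi, if_pos rfl, hψs0]
    · rw [hψm a h1 han, Stmt3Aux.Psi, if_neg (by omega)]
      rfl
  -- recursion for ψ
  have recψ : ∀ m', 1 ≤ m' → m' ≤ n → ψs m' =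
      ∑ l ∈ Finset.Icc 1 m',
        (R * (Es l • (1 : Module.End ℂ 𝓗) - if l = 1 then V else 0)) (ψs (m' - l)) := by
    intro m' h1 h2
    have hs := Stmt3Aux.split
      (fun l => R * (Es l • (1 : Module.End ℂ 𝓗) - if l = 1 then V else 0))
      (fun l => R * (Es l • (1 : Module.End ℂ 𝓗) - if l = 1 then V else 0)) ψ₀ m' h1
    simp only [ite_self] at hs
    rw [hψm m' h1 h2]
    calc (∑ k ∈ Finset.Icc 1 m',
        ∑ j ∈ (Fintype.piFinset fun _ : Fin k => Finset.Icc 1 m').filter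
            (fun j => ∑ s, j s = m'),
          ((List.ofFn fun s : Fin k =>
              R * (Es (j s) • (1 : Module.End ℂ 𝓗) -
                if j s = 1 then V else 0)).prod) ψ₀)
        = ∑ l ∈ Finset.Icc 1 m',
            (R * (Es l • (1 : Module.End ℂ 𝓗) - if l = 1 then V else 0))
              (Stmt3Aux.Psi (fun l => R * (Es l • (1 : Module.End ℂ 𝓗) -
                if l = 1 then V else 0)) ψ₀ (m' - l)) := hs
      _ = _ := by
          refine Finset.sum_congr rfl fun l hl => ?_
          rw [Finset.mem_Icc] at hl
          rw [hPsi (m' - l) (by omega)]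
  -- vector identity with head operator A
  have Evec : ∀ m', 1 ≤ m' → m' ≤ n →
      (∑ k ∈ Finset.Icc 1 m', ∑ j ∈ Stmt3Aux.C m' k,
        ((List.ofFn fun s : Fin k =>
          if (s : ℕ) = 0 then (Es (j s) • (1 : Module.End ℂ 𝓗) - if j s = 1 then V else 0)
          else R * (Es (j s) • (1 : Module.End ℂ 𝓗) - if j s = 1 then V else 0)).prod) ψ₀)
      = ∑ l ∈ Finset.Icc 1 m',
          (Es l • (1 : Module.End ℂ 𝓗) - if l = 1 then V else 0) (ψs (m' - l)) := by
    intro m' h1 h2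
    have hs := Stmt3Aux.split
      (fun l => Es l • (1 : Module.End ℂ 𝓗) - if l = 1 then V else 0)
      (fun l => R * (Es l • (1 : Module.End ℂ 𝓗) - if l = 1 then V else 0)) ψ₀ m' h1
    rw [hs]
    refine Finset.sum_congr rfl fun l hl => ?_
    rw [Finset.mem_Icc] at hl
    rw [hPsi (m' - l) (by omega)]
  -- orthogonality sum vanishes
  have Ezero : ∀ m', 1 ≤ m' → m' ≤ n →
      ∑ l ∈ Finset.Icc 1 m',
        ⟪ψ₀, (Es l • (1 : Module.End ℂ 𝓗) - if l = 1 then V else 0) (ψs (m' - l))⟫_ℂ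
        = 0 := by
    intro m' h1 h2
    have hv := Evec m' h1 h2
    have hinner : ∑ l ∈ Finset.Icc 1 m',
        ⟪ψ₀, (Es l • (1 : Module.End ℂ 𝓗) - if l = 1 then V else 0) (ψs (m' - l))⟫_ℂ
        = ∑ k ∈ Finset.Icc 1 m', ∑ j ∈ Stmt3Aux.C m' k,
            ⟪ψ₀, ((List.ofFn fun s : Fin k =>
              if (s : ℕ) = 0 then (Es (j s) • (1 : Module.End ℂ 𝓗) - if j s = 1 then V else 0)
              else R * (Es (j s) • (1 : Module.End ℂ 𝓗) - if j s = 1 then V else 0)).prod) ψ₀⟫_ℂ := by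
      rw [← inner_sum, ← hv, inner_sum]
      exact Finset.sum_congr rfl fun k _ => (inner_sum _ _ _)
    rw [hinner]
    have hins : Finset.Icc 1 m' = insert 1 (Finset.Icc 2 m') := by
      ext x; simp only [Finset.mem_Icc, Finset.mem_insert]; omega
    have h1mem : (1 : ℕ) ∉ Finset.Icc 2 m' := by simp
    rw [hins, Finset.sum_insert h1mem]
    have hterm1 : ∑ j ∈ Stmt3Aux.C m' 1,
        ⟪ψ₀, ((List.ofFn fun s : Fin 1 =>
          if (s : ℕ) = 0 then (Es (j s) • (1 : Module.End ℂ 𝓗) - if j s = 1 then V else 0)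
          else R * (Es (j s) • (1 : Module.End ℂ 𝓗) - if j s = 1 then V else 0)).prod) ψ₀⟫_ℂ
        = ⟪ψ₀, (Es m' • (1 : Module.End ℂ 𝓗) - if m' = 1 then V else 0) ψ₀⟫_ℂ := by
      rw [Stmt3Aux.C_one h1, Finset.sum_singleton]
      simp
    rw [hterm1]
    rcases Nat.lt_or_ge m' 2 with hm2 | hm2
    · -- m' = 1
      have : m' = 1 := by omega
      subst this
      have : Finset.Icc 2 1 = (∅ : Finset ℕ) := by decide
      rw [this, Finset.sum_empty]
      simp [inner_sub_right, inner_smul_right, hnorm, hE1, hψ₀norm,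
        LinearMap.smul_apply, Module.End.one_apply, LinearMap.sub_apply]
    · -- m' ≥ 2
      have hEmv := hEm m' hm2 h2
      have hsum2 : ∑ k ∈ Finset.Icc 2 m', ∑ j ∈ Stmt3Aux.C m' k,
          ⟪ψ₀, ((List.ofFn fun s : Fin k =>
            if (s : ℕ) = 0 then (Es (j s) • (1 : Module.End ℂ 𝓗) - if j s = 1 then V else 0)
            else R * (Es (j s) • (1 : Module.End ℂ 𝓗) - if j s = 1 then V else 0)).prod) ψ₀⟫_ℂ
          = - Es m' := by
        rw [hEmv, neg_neg]
        refine Finset.sum_congr rfl fun k _ => Finset.sum_congr rfl fun j _ => ?_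
        congr 2
        refine congrArg _ (congrArg _ (funext fun s => ?_))
        by_cases hs : (s : ℕ) = 0 <;> simp [hs]
      rw [hsum2]
      have : ⟪ψ₀, (Es m' • (1 : Module.End ℂ 𝓗) - if m' = 1 then V else 0) ψ₀⟫_ℂ = Es m' := by
        rw [if_neg (by omega)]
        simp [inner_sub_right, inner_smul_right, hnorm, hψ₀norm,
          LinearMap.smul_apply, Module.End.one_apply, LinearMap.sub_apply]
      rw [this]
      ring
  -- main computation
  have key : H₀ (ψs m) - (E₀ : ℂ) • ψs m
      = ∑ l ∈ Finset.Icc 1 m,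
          (Es l • (1 : Module.End ℂ 𝓗) - if l = 1 then V else 0) (ψs (m - l)) := by
    conv_lhs => rw [recψ m hm1 hmn]
    rw [map_sum, Finset.smul_sum, ← Finset.sum_sub_distrib]
    have hterm : ∀ l ∈ Finset.Icc 1 m,
        H₀ ((R * (Es l • (1 : Module.End ℂ 𝓗) - if l = 1 then V else 0)) (ψs (m - l)))
          - (E₀ : ℂ) • (R * (Es l • (1 : Module.End ℂ 𝓗) - if l = 1 then V else 0)) (ψs (m - l))
        = (Es l • (1 : Module.End ℂ 𝓗) - if l = 1 then V else 0) (ψs (m - l))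
          - ⟪ψ₀, (Es l • (1 : Module.End ℂ 𝓗) - if l = 1 then V else 0) (ψs (m - l))⟫_ℂ • ψ₀ := by
      intro l _
      rw [Module.End.mul_apply]
      exact hR2 _
    rw [Finset.sum_congr rfl hterm, Finset.sum_sub_distrib, ← Finset.sum_smul,
      Ezero m hm1 hmn, zero_smul, sub_zero]
  have key2 : ∑ l ∈ Finset.Icc 1 m,
      (Es l • (1 : Module.End ℂ 𝓗) - if l = 1 then V else 0) (ψs (m - l))
      = (∑ l ∈ Finset.Icc 1 m, Es l • ψs (m - l)) - V (ψs (m - 1)) := by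
    have hterm : ∀ l ∈ Finset.Icc 1 m,
        (Es l • (1 : Module.End ℂ 𝓗) - if l = 1 then V else 0) (ψs (m - l))
        = Es l • ψs (m - l) - (if l = 1 then V (ψs (m - 1)) else 0) := by
      intro l _
      by_cases hl : l = 1 <;>
        simp [hl, LinearMap.sub_apply, LinearMap.smul_apply, Module.End.one_apply]
    rw [Finset.sum_congr rfl hterm, Finset.sum_sub_distrib]
    congr 1
    rw [Finset.sum_ite_eq' (Finset.Icc 1 m) 1 (fun _ => V (ψs (m - 1))),
      if_pos (by rw [Finset.mem_Icc]; omega)]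
  -- assemble
  have hrhs : ∑ k ∈ Finset.range (m + 1), Es k • ψs (m - k)
      = (E₀ : ℂ) • ψs m + ∑ l ∈ Finset.Icc 1 m, Es l • ψs (m - l) := by
    rw [Finset.sum_range_succ' (fun k => Es k • ψs (m - k)) m]
    rw [Stmt3Aux.sum_Icc_one m (fun l => Es l • ψs (m - l))]
    simp only [Nat.sub_zero, hEs0]
    exact add_comm _ _
  rw [hrhs]
  have := key
  have h1 : H₀ (ψs m) = (E₀ : ℂ) • ψs m
      + ((∑ l ∈ Finset.Icc 1 m, Es l • ψs (m - l)) - V (ψs (m - 1))) := by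
    rw [← key2, ← key]; abel
  rw [h1]; abel
end

section
/- Let n ≥ 2. Define K₀ := R, E₁ := ⟨ψ₀, Vψ₀⟩, and recursively for m = 1, …, n−2: K_m := Σ_{j=1}^{m} K_{j−1}(E_{m+1−j} − δ_{j,m}V)K₀ and E_{m+1} := −⟨ψ₀, V K_{m−1} V ψ₀⟩ (where δ_{j,m} = 1 if j = m and 0 otherwise, and scalars act as multiples of the identity); finally set Eₙ := −⟨ψ₀, V K_{n−2} V ψ₀⟩. Then E(λ) has an asymptotic expansion up to order n: for every m with 1 ≤ m ≤ n, lim_{λ→0⁺} λ^{−m} ( E(λ) − Σ_{k=0}^{m} E_k λ^k ) = 0. -/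
open Filter
open scoped InnerProductSpace

private lemma sum_Icc_one' {M : Type*} [AddCommMonoid M] (f : ℕ → M) (m : ℕ) :
    ∑ j ∈ Finset.Icc 1 m, f j = ∑ i ∈ Finset.range m, f (i + 1) := by
  induction m with
  | zero => simp
  | succ m ih => rw [Finset.sum_Icc_succ_top (by omega), ih, Finset.sum_range_succ]

private lemma sum_Icc_shift' {M : Type*} [AddCommMonoid M] (f : ℕ → M) (i a b : ℕ) :
    ∑ j ∈ Finset.Icc (a + i) (b + i), f (j - i) = ∑ j ∈ Finset.Icc a b, f j := by
  rw [← Finset.map_add_right_Icc, Finset.sum_map]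
  simp

private lemma revRec {A : Type*} [Ring A] (K M : ℕ → A) (N : ℕ)
    (hK : ∀ m, 1 ≤ m → m ≤ N →
      K m = ∑ j ∈ Finset.Icc 1 m, K (j - 1) * M (m + 1 - j) * K 0) :
    ∀ m, 1 ≤ m → m ≤ N → K m = ∑ i ∈ Finset.Icc 1 m, K 0 * M i * K (m - i) := by
  intro m
  induction m using Nat.strong_induction_on with
  | _ m ih =>
    intro h1 hN
    rcases Nat.lt_or_ge 1 m with hm2 | hm1
    · -- m ≥ 2
      have hsplitL : Finset.Icc 1 m = insert 1 (Finset.Icc 2 m) := by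
        ext j; simp only [Finset.mem_Icc, Finset.mem_insert]; omega
      have hm1eq : m = (m - 1) + 1 := by omega
      have hRHS : ∑ i ∈ Finset.Icc 1 m, K 0 * M i * K (m - i)
          = (∑ i ∈ Finset.Icc 1 (m - 1), K 0 * M i * K (m - i)) + K 0 * M m * K (m - m) := by
        conv_lhs => rw [hm1eq]
        rw [Finset.sum_Icc_succ_top (by omega)]
        simp only [← hm1eq]
      have hterm1 : K (1 - 1) * M (m + 1 - 1) * K 0 = K 0 * M m * K (m - m) := by simp
      rw [hRHS, hK m h1 hN, hsplitL, Finset.sum_insert (by simp), hterm1, add_comm]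
      congr 1
      have hLHS : ∀ j ∈ Finset.Icc 2 m,
          K (j - 1) * M (m + 1 - j) * K 0
            = ∑ i ∈ Finset.Icc 1 (j - 1), K 0 * M i * (K (j - 1 - i) * M (m + 1 - j) * K 0) := by
        intro j hj
        simp only [Finset.mem_Icc] at hj
        rw [ih (j - 1) (by omega) (by omega) (by omega), Finset.sum_mul, Finset.sum_mul]
        exact Finset.sum_congr rfl fun i _ => by rw [mul_assoc (K 0 * M i), mul_assoc (K 0 * M i)]
      rw [Finset.sum_congr rfl hLHS]
      rw [Finset.sum_comm' (t' := Finset.Icc 1 (m - 1)) (s' := fun i => Finset.Icc (i + 1) m)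
        (by intro j i; simp only [Finset.mem_Icc]; omega)]
      refine Finset.sum_congr rfl fun i hi => ?_
      simp only [Finset.mem_Icc] at hi
      rw [← Finset.mul_sum]
      congr 1
      have hset : Finset.Icc (i + 1) m = Finset.Icc (1 + i) ((m - i) + i) := by
        congr 1 <;> omega
      have hcong : ∀ j ∈ Finset.Icc (1 + i) ((m - i) + i),
          K (j - 1 - i) * M (m + 1 - j) * K 0
            = (fun j' => K (j' - 1) * M ((m - i) + 1 - j') * K 0) (j - i) := by
        intro j hj
        simp only [Finset.mem_Icc] at hj
        have e1 : j - 1 - i = j - i - 1 := by omega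
        have e2 : m + 1 - j = (m - i) + 1 - (j - i) := by omega
        rw [e1, e2]
      rw [hset, Finset.sum_congr rfl hcong]
      exact (sum_Icc_shift' (fun j' => K (j' - 1) * M ((m - i) + 1 - j') * K 0) i 1 (m - i)).trans
        (hK (m - i) (by omega) (by omega)).symm
    · -- m = 1
      interval_cases m
      rw [hK 1 le_rfl hN]
      simp

/-- **Resolvent/Feshbach method (Lemma 3.5).**
Under Hypothesis H (eigenpairs `(H₀ + λV)ψ(λ) = E(λ)ψ(λ)` for `λ ∈ [0,λ₀]`,
continuity at `λ = 0`, normalization `⟨ψ₀, ψ(λ)⟩ = 1`), with `R` a reduced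
resolvent for `(H₀, E₀, ψ₀)`: define `K₀ := R`, `E₁ := ⟨ψ₀, Vψ₀⟩`,
`K_m := ∑_{j=1}^m K_{j-1}(E_{m+1-j} - δ_{jm}V)K₀` for `1 ≤ m ≤ n-2`,
`E_{m+1} := -⟨ψ₀, V K_{m-1} V ψ₀⟩` for `1 ≤ m ≤ n-1` (in particular
`Eₙ = -⟨ψ₀, V K_{n-2} V ψ₀⟩`).  Then `E(λ)` has an asymptotic expansion to
order `n`. -/
theorem stmt4
    {𝓗 : Type*} [NormedAddCommGroup 𝓗] [InnerProductSpace ℂ 𝓗] [CompleteSpace 𝓗]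
    (H₀ V R : Module.End ℂ 𝓗)
    (hH₀sym : ∀ x y : 𝓗, ⟪H₀ x, y⟫_ℂ = ⟪x, H₀ y⟫_ℂ)
    (hVsym : ∀ x y : 𝓗, ⟪V x, y⟫_ℂ = ⟪x, V y⟫_ℂ)
    (lam0 : ℝ) (hlam0 : 0 < lam0)
    (E : ℝ → ℝ) (ψ : ℝ → 𝓗)
    (heig : ∀ lam ∈ Set.Icc (0 : ℝ) lam0,
      H₀ (ψ lam) + (lam : ℂ) • V (ψ lam) = (E lam : ℂ) • ψ lam)
    (hψ0ne : ψ 0 ≠ 0)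
    (hψcont : Tendsto ψ (nhdsWithin 0 (Set.Ioi 0)) (nhds (ψ 0)))
    (hEcont : Tendsto E (nhdsWithin 0 (Set.Ioi 0)) (nhds (E 0)))
    (hnorm : ∀ lam ∈ Set.Icc (0 : ℝ) lam0, ⟪ψ 0, ψ lam⟫_ℂ = 1)
    -- `R` is a reduced resolvent for `(H₀, E(0), ψ(0))`
    (hR1 : ∀ x : 𝓗, ⟪ψ 0, R x⟫_ℂ = 0)
    (hR2 : ∀ x : 𝓗, H₀ (R x) - (E 0 : ℂ) • R x = x - ⟪ψ 0, x⟫_ℂ • ψ 0)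
    (hR3 : ∀ x : 𝓗, R (H₀ x - (E 0 : ℂ) • x) = x - ⟪ψ 0, x⟫_ℂ • ψ 0)
    (n : ℕ) (hn : 2 ≤ n)
    (K : ℕ → Module.End ℂ 𝓗) (Es : ℕ → ℂ)
    (hK0 : K 0 = R)
    (hEs0 : Es 0 = (E 0 : ℂ))
    (hEs1 : Es 1 = ⟪ψ 0, V (ψ 0)⟫_ℂ)
    (hK : ∀ m, 1 ≤ m → m ≤ n - 2 →
      K m = ∑ j ∈ Finset.Icc 1 m,
        K (j - 1) * (Es (m + 1 - j) • (1 : Module.End ℂ 𝓗) -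
          if j = m then V else 0) * K 0)
    (hEs : ∀ m, 1 ≤ m → m ≤ n - 1 →
      Es (m + 1) = - ⟪ψ 0, V ((K (m - 1)) (V (ψ 0)))⟫_ℂ) :
    ∀ m, 1 ≤ m → m ≤ n →
      Tendsto (fun lam : ℝ => ((lam : ℂ) ^ m)⁻¹ *
          ((E lam : ℂ) - ∑ k ∈ Finset.range (m + 1), Es k * (lam : ℂ) ^ k))
        (nhdsWithin 0 (Set.Ioi 0)) (nhds 0) := by
  have hmem0 : (0 : ℝ) ∈ Set.Icc (0 : ℝ) lam0 := ⟨le_refl 0, hlam0.le⟩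
  have hψ0n : ⟪ψ 0, ψ 0⟫_ℂ = 1 := hnorm 0 hmem0
  have hH0ψ0 : H₀ (ψ 0) = (E 0 : ℂ) • ψ 0 := by simpa using heig 0 hmem0
  have hRψ0 : R (ψ 0) = 0 := by
    have h0 : H₀ (R (ψ 0)) - (E 0 : ℂ) • R (ψ 0) = 0 := by
      rw [hR2 (ψ 0), hψ0n, one_smul, sub_self]
    have h3 := hR3 (R (ψ 0))
    rw [h0, hR1 (ψ 0)] at h3
    simpa using h3.symm
  -- continuity of V and R
  have hVcont : Continuous V := by
    have : (V : 𝓗 →ₗ[ℂ] 𝓗).IsSymmetric := hVsym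
    exact this.continuous
  have hRsym : ∀ x y : 𝓗, ⟪R x, y⟫_ℂ = ⟪x, R y⟫_ℂ := by
    intro x y
    have hRxψ0 : ⟪R x, ψ 0⟫_ℂ = 0 := by
      rw [← inner_conj_symm, hR1 x, map_zero]
    have hψ0Ry : ⟪ψ 0, R y⟫_ℂ = 0 := hR1 y
    have hy' : (H₀ (R y) - (E 0 : ℂ) • R y) + ⟪ψ 0, y⟫_ℂ • ψ 0 = y := by
      rw [hR2 y, sub_add_cancel]
    calc ⟪R x, y⟫_ℂ
        = ⟪R x, (H₀ (R y) - (E 0 : ℂ) • R y) + ⟪ψ 0, y⟫_ℂ • ψ 0⟫_ℂ := by rw [hy']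
      _ = ⟪R x, H₀ (R y)⟫_ℂ - (E 0 : ℂ) * ⟪R x, R y⟫_ℂ
          + ⟪ψ 0, y⟫_ℂ * ⟪R x, ψ 0⟫_ℂ := by
          rw [inner_add_right, inner_sub_right, inner_smul_right, inner_smul_right]
      _ = ⟪H₀ (R x), R y⟫_ℂ - (E 0 : ℂ) * ⟪R x, R y⟫_ℂ := by
          rw [hRxψ0, mul_zero, add_zero, hH₀sym]
      _ = ⟪H₀ (R x) - (E 0 : ℂ) • R x, R y⟫_ℂ := by
          rw [inner_sub_left, inner_smul_left, Complex.conj_ofReal]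
      _ = ⟪x - ⟪ψ 0, x⟫_ℂ • ψ 0, R y⟫_ℂ := by rw [hR2 x]
      _ = ⟪x, R y⟫_ℂ := by
          rw [inner_sub_left, inner_smul_left, hψ0Ry, mul_zero, sub_zero]
  have hRcont : Continuous R := by
    have : (R : 𝓗 →ₗ[ℂ] 𝓗).IsSymmetric := hRsym
    exact this.continuous
  -- the eigenvalue identity (*)
  have hstar : ∀ lam ∈ Set.Icc (0 : ℝ) lam0,
      (E lam : ℂ) = (E 0 : ℂ) + (lam : ℂ) * ⟪ψ 0, V (ψ lam)⟫_ℂ := by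
    intro lam hlam
    have h2 := congrArg (fun w => ⟪ψ 0, w⟫_ℂ) (heig lam hlam)
    simp only [inner_add_right, inner_smul_right] at h2
    rw [hnorm lam hlam, mul_one] at h2
    have h3 : ⟪ψ 0, H₀ (ψ lam)⟫_ℂ = (E 0 : ℂ) := by
      rw [← hH₀sym, hH0ψ0, inner_smul_left, Complex.conj_ofReal, hnorm lam hlam, mul_one]
    rw [h3] at h2
    exact h2.symm
  -- the eigenvector identity (**)
  have hstar2 : ∀ lam ∈ Set.Icc (0 : ℝ) lam0,
      ψ lam - ψ 0 = R (((E lam : ℂ) - (E 0 : ℂ)) • ψ lam - (lam : ℂ) • V (ψ lam)) := by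
    intro lam hlam
    have h4 : H₀ (ψ lam) - (E 0 : ℂ) • ψ lam
        = ((E lam : ℂ) - (E 0 : ℂ)) • ψ lam - (lam : ℂ) • V (ψ lam) := by
      have h := heig lam hlam
      rw [sub_smul]
      have : H₀ (ψ lam) = (E lam : ℂ) • ψ lam - (lam : ℂ) • V (ψ lam) := by
        rw [← h]; abel
      rw [this]; abel
    have h5 := hR3 (ψ lam)
    rw [h4, hnorm lam hlam, one_smul] at h5
    exact h5.symm
  -- the coefficient vectors φ
  obtain ⟨φ, hφ0, hφs⟩ : ∃ φ : ℕ → 𝓗, φ 0 = ψ 0 ∧ ∀ k, φ (k + 1) = -(K k (V (ψ 0))) :=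
    ⟨fun k => Nat.rec (ψ 0) (fun k _ => -(K k (V (ψ 0)))) k, rfl, fun k => rfl⟩
  obtain ⟨S, hS⟩ : ∃ S : ℕ → ℂ → 𝓗, ∀ p z, S p z = ∑ k ∈ Finset.range (p + 1), z ^ k • φ k :=
    ⟨_, fun _ _ => rfl⟩
  obtain ⟨r, hr⟩ : ∃ r : ℕ → ℝ → 𝓗,
      ∀ p lam, r p lam = (((lam : ℂ)) ^ p)⁻¹ • (ψ lam - S p (lam : ℂ)) := ⟨_, fun _ _ => rfl⟩
  obtain ⟨e, he⟩ : ∃ e : ℕ → ℝ → ℂ,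
      ∀ p lam, e p lam = (((lam : ℂ)) ^ p)⁻¹ *
        ((E lam : ℂ) - ∑ k ∈ Finset.range (p + 1), Es k * (lam : ℂ) ^ k) := ⟨_, fun _ _ => rfl⟩
  -- Es in terms of φ
  have hEsφ : ∀ k, k ≤ n - 1 → Es (k + 1) = ⟪ψ 0, V (φ k)⟫_ℂ := by
    intro k hk
    match k with
    | 0 => rw [hEs1, hφ0]
    | (k' + 1) =>
      rw [hEs (k' + 1) (by omega) (by omega)]
      have : φ (k' + 1) = -(K ((k' + 1) - 1) (V (ψ 0))) := by simp [hφs]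
      rw [this, map_neg, inner_neg_right]
  -- the reversed recursion for K
  obtain ⟨M, hM⟩ : ∃ M : ℕ → Module.End ℂ 𝓗,
      ∀ i, M i = Es i • (1 : Module.End ℂ 𝓗) - (if i = 1 then V else 0) := ⟨_, fun _ => rfl⟩
  have hK' : ∀ p, 1 ≤ p → p ≤ n - 2 →
      K p = ∑ j ∈ Finset.Icc 1 p, K (j - 1) * M (p + 1 - j) * K 0 := by
    intro p h1 h2
    rw [hK p h1 h2]
    refine Finset.sum_congr rfl fun j hj => ?_
    simp only [Finset.mem_Icc] at hj
    rw [hM]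
    have : (if j = p then V else 0) = (if p + 1 - j = 1 then V else (0 : Module.End ℂ 𝓗)) := by
      rcases eq_or_ne j p with h | h
      · subst h; rw [if_pos rfl, if_pos (by omega)]
      · rw [if_neg h, if_neg (by omega)]
    rw [this]
  have hrev := revRec K M (n - 2) hK'
  -- the Rayleigh-Schrödinger recursion for φ
  have hVREC : ∀ p, 1 ≤ p → p ≤ n - 1 →
      φ p = (∑ j ∈ Finset.Icc 1 (p - 1), Es j • R (φ (p - j))) - R (V (φ (p - 1))) := by
    intro p h1 h2
    rcases Nat.lt_or_ge 1 p with h2' | h1'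
    · -- p ≥ 2
      have hφp : φ p = -(K (p - 1) (V (ψ 0))) := by
        have h' := hφs (p - 1)
        rwa [Nat.sub_add_cancel h1] at h'
      rw [hφp, hrev (p - 1) (by omega) (by omega), LinearMap.sum_apply, ← Finset.sum_neg_distrib]
      have hterm : ∀ i ∈ Finset.Icc 1 (p - 1),
          -((K 0 * M i * K (p - 1 - i)) (V (ψ 0)))
            = Es i • R (φ (p - i)) - (if i = 1 then R (V (φ (p - 1))) else 0) := by
        intro i hi
        simp only [Finset.mem_Icc] at hi
        have hφpi : φ (p - i) = -(K (p - 1 - i) (V (ψ 0))) := by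
          have h' := hφs (p - 1 - i)
          rwa [show p - 1 - i + 1 = p - i from by omega] at h'
        rw [Module.End.mul_apply, Module.End.mul_apply, ← map_neg, ← map_neg, ← hφpi, hK0, hM]
        rw [LinearMap.sub_apply, LinearMap.smul_apply, Module.End.one_apply]
        rw [map_sub, map_smul]
        congr 1
        rcases eq_or_ne i 1 with h | h
        · subst h
          rw [if_pos rfl, if_pos rfl]
        · rw [if_neg h, if_neg h, LinearMap.zero_apply, map_zero]
      rw [Finset.sum_congr rfl hterm, Finset.sum_sub_distrib]
      congr 1
      rw [Finset.sum_ite_eq' (Finset.Icc 1 (p - 1)) 1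
        (fun _ => R (V (φ (p - 1))))]
      rw [if_pos (by simp only [Finset.mem_Icc]; omega)]
    · -- p = 1
      interval_cases p
      simp only [Nat.sub_self, hφ0]
      have : φ 1 = -(K 0 (V (ψ 0))) := hφs 0
      rw [this, hK0]
      simp
  -- basic facts about S
  have hS0 : ∀ z : ℂ, S 0 z = ψ 0 := by
    intro z; rw [hS]; simp [hφ0]
  have hSsucc : ∀ (p : ℕ) (z : ℂ), S (p + 1) z = S p z + z ^ (p + 1) • φ (p + 1) := by
    intro p z; rw [hS, hS, Finset.sum_range_succ]
  have hsum0 : ∀ (p : ℕ) (z : ℂ),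
      (∑ k ∈ Finset.range (p + 1), Es k * z ^ k)
        = (E 0 : ℂ) + ∑ j ∈ Finset.Icc 1 p, Es j * z ^ j := by
    intro p z
    rw [sum_Icc_one' (fun j => Es j * z ^ j) p, Finset.sum_range_succ' (fun k => Es k * z ^ k) p]
    simp only [pow_zero, mul_one, hEs0]
    exact add_comm _ _
  -- the polynomial identity
  have hPID : ∀ p, 1 ≤ p → p ≤ n - 1 → ∀ z : ℂ,
      S p z - ψ 0 = (∑ j ∈ Finset.Icc 1 p, (Es j * z ^ j) • R (S (p - j) z))
        - z • R (V (S (p - 1) z)) := by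
    intro p hp
    induction p, hp using Nat.le_induction with
    | base =>
      intro _ z
      have h1 : S 1 z = ψ 0 + z • φ 1 := by
        have := hSsucc 0 z
        rwa [hS0, pow_one] at this
      have hφ1 : φ 1 = -(R (V (ψ 0))) := by rw [← hK0]; exact hφs 0
      rw [h1, hφ1, Finset.Icc_self, Finset.sum_singleton]
      simp [hS0, hRψ0]
    | succ p hp ih =>
      intro hpn z
      have ih' := ih (by omega) z
      have hrec := hVREC (p + 1) (by omega) (by omega)
      simp only [Nat.add_sub_cancel] at hrec
      have hSp : S p z = S (p - 1) z + z ^ p • φ p := by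
        have h' := hSsucc (p - 1) z
        rwa [Nat.sub_add_cancel hp] at h'
      have hsplit : ∑ j ∈ Finset.Icc 1 (p + 1), (Es j * z ^ j) • R (S (p + 1 - j) z)
          = (∑ j ∈ Finset.Icc 1 p, (Es j * z ^ j) • R (S (p + 1 - j) z)) := by
        rw [Finset.sum_Icc_succ_top (by omega)]
        have : S (p + 1 - (p + 1)) z = ψ 0 := by rw [Nat.sub_self, hS0]
        rw [this, hRψ0, smul_zero, add_zero]
      have hterm : ∀ j ∈ Finset.Icc 1 p, (Es j * z ^ j) • R (S (p + 1 - j) z)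
          = (Es j * z ^ j) • R (S (p - j) z) + z ^ (p + 1) • (Es j • R (φ (p + 1 - j))) := by
        intro j hj
        simp only [Finset.mem_Icc] at hj
        have h' : p + 1 - j = (p - j) + 1 := by omega
        have hz : (Es j * z ^ j) * z ^ ((p - j) + 1) = z ^ (p + 1) * Es j := by
          rw [mul_assoc, ← pow_add, show j + ((p - j) + 1) = p + 1 from by omega, mul_comm]
        rw [h', hSsucc, map_add, map_smul, smul_add, smul_smul, smul_smul, hz]
      calc S (p + 1) z - ψ 0
          = (S p z - ψ 0) + z ^ (p + 1) • φ (p + 1) := by rw [hSsucc]; abel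
        _ = ((∑ j ∈ Finset.Icc 1 p, (Es j * z ^ j) • R (S (p - j) z))
              - z • R (V (S (p - 1) z)))
            + z ^ (p + 1) • ((∑ j ∈ Finset.Icc 1 p, Es j • R (φ (p + 1 - j))) - R (V (φ p))) := by
            rw [ih', hrec]
        _ = (∑ j ∈ Finset.Icc 1 (p + 1), (Es j * z ^ j) • R (S (p + 1 - j) z))
            - z • R (V (S (p + 1 - 1) z)) := by
            rw [hsplit, Finset.sum_congr rfl hterm, Finset.sum_add_distrib,
              Nat.add_sub_cancel, hSp, map_add, map_add, smul_add, map_smul, map_smul,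
              smul_smul, ← pow_succ', smul_sub, Finset.smul_sum]
            abel
  -- the unscaled identity
  have hUID : ∀ p, 1 ≤ p → p ≤ n - 1 → ∀ lam ∈ Set.Ioc (0 : ℝ) lam0,
      ψ lam - S p (lam : ℂ)
        = R ((((E lam : ℂ) - ∑ k ∈ Finset.range (p + 1), Es k * (lam : ℂ) ^ k) • ψ lam)
            + ∑ j ∈ Finset.Icc 1 p, (Es j * (lam : ℂ) ^ j) • (ψ lam - S (p - j) (lam : ℂ)))
          - (lam : ℂ) • R (V (ψ lam - S (p - 1) (lam : ℂ))) := by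
    intro p hp1 hp2 lam hlam
    have hIcc : lam ∈ Set.Icc (0 : ℝ) lam0 := ⟨hlam.1.le, hlam.2⟩
    have h1' : ((E lam : ℂ) - (E 0 : ℂ)) • R (ψ lam) - (lam : ℂ) • R (V (ψ lam))
        = ψ lam - ψ 0 := by
      have h := (hstar2 lam hIcc).symm
      rwa [map_sub, map_smul, map_smul] at h
    have h2' := hPID p hp1 hp2 (lam : ℂ)
    have key : ψ lam - S p (lam : ℂ)
        = ((((E lam : ℂ) - (E 0 : ℂ)) • R (ψ lam) - (lam : ℂ) • R (V (ψ lam))))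
          - ((∑ j ∈ Finset.Icc 1 p, (Es j * (lam : ℂ) ^ j) • R (S (p - j) (lam : ℂ)))
            - (lam : ℂ) • R (V (S (p - 1) (lam : ℂ)))) := by
      rw [h1', ← h2']; abel
    rw [key, hsum0 p (lam : ℂ)]
    simp only [map_add, map_sub, map_smul, smul_sub, sub_smul, Finset.sum_sub_distrib,
      map_sum]
    rw [← Finset.sum_smul]
    module
  -- the scaled identity
  have hID : ∀ p, 1 ≤ p → p ≤ n - 1 → ∀ lam ∈ Set.Ioc (0 : ℝ) lam0,
      r p lam = R (e p lam • ψ lam + ∑ j ∈ Finset.Icc 1 p, Es j • r (p - j) lam)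
        - R (V (r (p - 1) lam)) := by
    intro p hp1 hp2 lam hlam
    have hz : (lam : ℂ) ≠ 0 := Complex.ofReal_ne_zero.mpr (ne_of_gt hlam.1)
    have hzp : ((lam : ℂ)) ^ p ≠ 0 := pow_ne_zero _ hz
    have expand : ((lam : ℂ) ^ p) •
        (R (e p lam • ψ lam + ∑ j ∈ Finset.Icc 1 p, Es j • r (p - j) lam)
          - R (V (r (p - 1) lam)))
        = R ((((E lam : ℂ) - ∑ k ∈ Finset.range (p + 1), Es k * (lam : ℂ) ^ k) • ψ lam)
            + ∑ j ∈ Finset.Icc 1 p, (Es j * (lam : ℂ) ^ j) • (ψ lam - S (p - j) (lam : ℂ)))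
          - (lam : ℂ) • R (V (ψ lam - S (p - 1) (lam : ℂ))) := by
      rw [smul_sub]
      congr 1
      · rw [← map_smul]
        congr 1
        rw [smul_add]
        congr 1
        · rw [he, smul_smul, mul_inv_cancel_left₀ hzp]
        · rw [Finset.smul_sum]
          refine Finset.sum_congr rfl fun j hj => ?_
          simp only [Finset.mem_Icc] at hj
          have hc : (lam : ℂ) ^ p * Es j * (((lam : ℂ)) ^ (p - j))⁻¹ = Es j * (lam : ℂ) ^ j := by
            rw [mul_comm ((lam : ℂ) ^ p) (Es j), mul_assoc,
              ← pow_sub_mul_pow (lam : ℂ) hj.2,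
              mul_comm ((lam : ℂ) ^ (p - j)) ((lam : ℂ) ^ j), mul_assoc,
              mul_inv_cancel₀ (pow_ne_zero _ hz), mul_one]
          rw [hr, smul_smul, smul_smul, hc]
      · rw [hr, map_smul, map_smul, smul_smul]
        congr 1
        have hps : (lam : ℂ) ^ p = (lam : ℂ) ^ (p - 1) * (lam : ℂ) := by
          conv_lhs => rw [show p = (p - 1) + 1 from by omega]
          rw [pow_succ]
        rw [hps, mul_comm ((lam : ℂ) ^ (p - 1)), mul_assoc,
          mul_inv_cancel₀ (pow_ne_zero _ hz), mul_one]
    rw [hr, hUID p hp1 hp2 lam hlam, ← expand, inv_smul_smul₀ hzp]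
  -- the filter
  have hIocL : Set.Ioc (0 : ℝ) lam0 ∈ nhdsWithin (0 : ℝ) (Set.Ioi 0) :=
    Ioc_mem_nhdsGT_of_mem ⟨le_refl 0, hlam0⟩
  -- step for e
  have hstepE : ∀ p, p ≤ n - 1 →
      Tendsto (fun lam => r p lam) (nhdsWithin 0 (Set.Ioi 0)) (nhds 0) →
      Tendsto (fun lam => e (p + 1) lam) (nhdsWithin 0 (Set.Ioi 0)) (nhds 0) := by
    intro p hp hrp
    have hcongr : ∀ lam ∈ Set.Ioc (0 : ℝ) lam0, e (p + 1) lam = ⟪ψ 0, V (r p lam)⟫_ℂ := by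
      intro lam hlam
      have hIcc : lam ∈ Set.Icc (0 : ℝ) lam0 := ⟨hlam.1.le, hlam.2⟩
      have hz : (lam : ℂ) ≠ 0 := Complex.ofReal_ne_zero.mpr (ne_of_gt hlam.1)
      have hinner : ∑ j ∈ Finset.Icc 1 (p + 1), Es j * (lam : ℂ) ^ j
          = (lam : ℂ) * ⟪ψ 0, V (S p (lam : ℂ))⟫_ℂ := by
        rw [sum_Icc_one' (fun j => Es j * (lam : ℂ) ^ j) (p + 1)]
        have : ∀ i ∈ Finset.range (p + 1),
            Es (i + 1) * (lam : ℂ) ^ (i + 1)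
              = (lam : ℂ) * ((lam : ℂ) ^ i * ⟪ψ 0, V (φ i)⟫_ℂ) := by
          intro i hi
          simp only [Finset.mem_range] at hi
          rw [hEsφ i (by omega), pow_succ]
          ring
        rw [Finset.sum_congr rfl this, ← Finset.mul_sum]
        congr 1
        rw [hS, map_sum, inner_sum]
        exact Finset.sum_congr rfl fun i _ => by rw [map_smul, inner_smul_right]
      have hkey : (E lam : ℂ) - ∑ k ∈ Finset.range (p + 1 + 1), Es k * (lam : ℂ) ^ k
          = (lam : ℂ) * ⟪ψ 0, V (ψ lam - S p (lam : ℂ))⟫_ℂ := by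
        rw [hsum0 (p + 1) (lam : ℂ), hstar lam hIcc, hinner, map_sub, inner_sub_right]
        ring
      rw [he, hkey, hr, map_smul, inner_smul_right]
      rw [show ((lam : ℂ)) ^ (p + 1) = (lam : ℂ) * (lam : ℂ) ^ p from by rw [pow_succ']]
      rw [mul_inv]
      field_simp
    have htend : Tendsto (fun lam => ⟪ψ 0, V (r p lam)⟫_ℂ)
        (nhdsWithin 0 (Set.Ioi 0)) (nhds 0) := by
      have hc : Continuous fun x : 𝓗 => ⟪ψ 0, V x⟫_ℂ := continuous_const.inner hVcont
      have := (hc.tendsto 0).comp hrp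
      simpa [Function.comp_def] using this
    exact htend.congr' (by filter_upwards [hIocL] with lam hlam using (hcongr lam hlam).symm)
  -- the main induction
  have hrtend : ∀ p, p ≤ n - 1 →
      Tendsto (fun lam => r p lam) (nhdsWithin 0 (Set.Ioi 0)) (nhds 0) := by
    intro p
    induction p using Nat.strong_induction_on with
    | _ p ih =>
      intro hp
      rcases Nat.eq_zero_or_pos p with rfl | hp1
      · -- base case
        have hr0 : ∀ lam : ℝ, r 0 lam = ψ lam - ψ 0 := by
          intro lam
          rw [hr, pow_zero, inv_one, one_smul, hS0]
        have := hψcont.sub (tendsto_const_nhds (x := ψ 0))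
        rw [sub_self] at this
        exact this.congr fun lam => (hr0 lam).symm
      · -- inductive step
        have hep : Tendsto (fun lam => e p lam) (nhdsWithin 0 (Set.Ioi 0)) (nhds 0) := by
          have h := hstepE (p - 1) (by omega) (ih (p - 1) (by omega) (by omega))
          rwa [Nat.sub_add_cancel hp1] at h
        have hRHS : Tendsto (fun lam =>
            R (e p lam • ψ lam + ∑ j ∈ Finset.Icc 1 p, Es j • r (p - j) lam)
              - R (V (r (p - 1) lam))) (nhdsWithin 0 (Set.Ioi 0)) (nhds 0) := by
          have t1 : Tendsto (fun lam => e p lam • ψ lam)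
              (nhdsWithin 0 (Set.Ioi 0)) (nhds 0) := by
            have := hep.smul hψcont
            rwa [zero_smul] at this
          have t2 : Tendsto (fun lam => ∑ j ∈ Finset.Icc 1 p, Es j • r (p - j) lam)
              (nhdsWithin 0 (Set.Ioi 0)) (nhds 0) := by
            have := tendsto_finset_sum (Finset.Icc 1 p)
              (fun j hj => by
                have hj' := Finset.mem_Icc.mp hj
                exact ((ih (p - j) (by omega) (by omega)).const_smul (Es j) :
                  Tendsto (fun lam => Es j • r (p - j) lam)
                    (nhdsWithin 0 (Set.Ioi 0)) (nhds (Es j • (0 : 𝓗)))))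
            simpa using this
          have t3 : Tendsto (fun lam =>
              e p lam • ψ lam + ∑ j ∈ Finset.Icc 1 p, Es j • r (p - j) lam)
              (nhdsWithin 0 (Set.Ioi 0)) (nhds 0) := by
            have := t1.add t2
            rwa [add_zero] at this
          have t4 := (hRcont.tendsto 0).comp t3
          have t5 : Tendsto (fun lam => r (p - 1) lam)
              (nhdsWithin 0 (Set.Ioi 0)) (nhds 0) := ih (p - 1) (by omega) (by omega)
          have t6 := (hRcont.tendsto (V 0)).comp ((hVcont.tendsto 0).comp t5)
          have := t4.sub t6
          simpa using this
        refine hRHS.congr' ?_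
        filter_upwards [hIocL] with lam hlam
        exact (hID p hp1 hp (lam := lam) hlam).symm
  -- conclusion
  intro m hm1 hmn
  obtain ⟨p, rfl⟩ : ∃ p, m = p + 1 := ⟨m - 1, by omega⟩
  have h := hstepE p (by omega) (hrtend p (by omega))
  exact h.congr fun lam => he (p + 1) lam
end

section
/- Let n ≥ 1. Define K₀ := R, E₁ := ⟨ψ₀, Vψ₀⟩, and recursively for m = 1, …, n−1: K_m := Σ_{j=1}^{m} K_{j−1}(E_{m+1−j} − δ_{j,m}V)K₀ and E_{m+1} := −⟨ψ₀, V K_{m−1} V ψ₀⟩. For λ ∈ (0, λ₀] define E^{[0]}(λ) := E(λ), E^{[k]}(λ) := (E^{[k−1]}(λ) − E_{k−1})/λ for k ≥ 1, and R_k(λ) := Σ_{j=1}^{k} K_{j−1}( E^{[k+1−j]}(λ) − δ_{j,k}V ). Let P₀x := ⟨ψ₀, x⟩ψ₀ and P̄₀ := id − P₀. Then for every k with 1 ≤ k ≤ n and every λ ∈ (0, λ₀]: P₀ V P̄₀ ψ(λ) = − Σ_{j=1}^{k} λ^j P₀ V K_{j−1} V P₀ ψ(λ) + λ^k P₀ V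 R_k(λ) P̄₀ ψ(λ). -/
open scoped InnerProductSpace

/-- **The key expansion claim in the proof of Lemma 3.5.**
With `K₀ := R`, `E₁ := ⟨ψ₀, Vψ₀⟩`,
`K_m := ∑_{j=1}^m K_{j-1}(E_{m+1-j} - δ_{jm}V)K₀` and
`E_{m+1} := -⟨ψ₀, V K_{m-1} V ψ₀⟩` for `1 ≤ m ≤ n-1`, and with
`E⁽⁰⁾(λ) := E(λ)`, `E⁽ᵏ⁾(λ) := (E⁽ᵏ⁻¹⁾(λ) - E_{k-1})/λ`,
`R_k(λ) := ∑_{j=1}^k K_{j-1}(E⁽ᵏ⁺¹⁻ʲ⁾(λ) - δ_{jk}V)`,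
`P₀x := ⟨ψ₀,x⟩ψ₀`, `P̄₀ := id - P₀`, one has for every `1 ≤ k ≤ n` and
`λ ∈ (0, λ₀]`:
`P₀ V P̄₀ ψ(λ) = -∑_{j=1}^k λʲ P₀ V K_{j-1} V P₀ ψ(λ) + λᵏ P₀ V R_k(λ) P̄₀ ψ(λ)`. -/
theorem stmt5
    {𝓗 : Type*} [NormedAddCommGroup 𝓗] [InnerProductSpace ℂ 𝓗] [CompleteSpace 𝓗]
    (H₀ V R : Module.End ℂ 𝓗)
    (hH₀sym : ∀ x y : 𝓗, ⟪H₀ x, y⟫_ℂ = ⟪x, H₀ y⟫_ℂ)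
    (hVsym : ∀ x y : 𝓗, ⟪V x, y⟫_ℂ = ⟪x, V y⟫_ℂ)
    (lam0 : ℝ) (hlam0 : 0 < lam0)
    (E : ℝ → ℝ) (ψ : ℝ → 𝓗)
    (heig : ∀ lam ∈ Set.Icc (0 : ℝ) lam0,
      H₀ (ψ lam) + (lam : ℂ) • V (ψ lam) = (E lam : ℂ) • ψ lam)
    (hψ0ne : ψ 0 ≠ 0)
    (hnorm : ∀ lam ∈ Set.Icc (0 : ℝ) lam0, ⟪ψ 0, ψ lam⟫_ℂ = 1)
    -- `R` is a reduced resolvent for `(H₀, E(0), ψ(0))`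
    (hR1 : ∀ x : 𝓗, ⟪ψ 0, R x⟫_ℂ = 0)
    (hR2 : ∀ x : 𝓗, H₀ (R x) - (E 0 : ℂ) • R x = x - ⟪ψ 0, x⟫_ℂ • ψ 0)
    (hR3 : ∀ x : 𝓗, R (H₀ x - (E 0 : ℂ) • x) = x - ⟪ψ 0, x⟫_ℂ • ψ 0)
    (n : ℕ) (hn : 1 ≤ n)
    (K : ℕ → Module.End ℂ 𝓗) (Es : ℕ → ℂ)
    (hK0 : K 0 = R)
    (hEs0 : Es 0 = (E 0 : ℂ))
    (hEs1 : Es 1 = ⟪ψ 0, V (ψ 0)⟫_ℂ)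
    (hK : ∀ m, 1 ≤ m → m ≤ n - 1 →
      K m = ∑ j ∈ Finset.Icc 1 m,
        K (j - 1) * (Es (m + 1 - j) • (1 : Module.End ℂ 𝓗) -
          if j = m then V else 0) * K 0)
    (hEs : ∀ m, 1 ≤ m → m ≤ n - 1 →
      Es (m + 1) = - ⟪ψ 0, V ((K (m - 1)) (V (ψ 0)))⟫_ℂ)
    (Ebr : ℕ → ℝ → ℂ)
    (hEbr0 : ∀ lam : ℝ, Ebr 0 lam = (E lam : ℂ))
    (hEbrS : ∀ (k : ℕ) (lam : ℝ), Ebr (k + 1) lam = (Ebr k lam - Es k) / (lam : ℂ))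
    (Rk : ℕ → ℝ → Module.End ℂ 𝓗)
    (hRk : ∀ (k : ℕ) (lam : ℝ), Rk k lam = ∑ j ∈ Finset.Icc 1 k,
      K (j - 1) * (Ebr (k + 1 - j) lam • (1 : Module.End ℂ 𝓗) -
        if j = k then V else 0))
    (P0 : 𝓗 → 𝓗) (hP0 : ∀ x, P0 x = ⟪ψ 0, x⟫_ℂ • ψ 0)
    (Pbar : 𝓗 → 𝓗) (hPbar : ∀ x, Pbar x = x - P0 x) :
    ∀ k, 1 ≤ k → k ≤ n → ∀ lam : ℝ, 0 < lam → lam ≤ lam0 →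
      P0 (V (Pbar (ψ lam))) =
        - (∑ j ∈ Finset.Icc 1 k,
            (lam : ℂ) ^ j • P0 (V ((K (j - 1)) (V (P0 (ψ lam)))))) +
          (lam : ℂ) ^ k • P0 (V ((Rk k lam) (Pbar (ψ lam)))) := by

  intro k hk1 hkn lam hlam hlamle
  set ψ0 := ψ 0 with hψ0def
  have hmem0 : (0:ℝ) ∈ Set.Icc (0:ℝ) lam0 := ⟨le_refl 0, hlam0.le⟩
  have hmeml : lam ∈ Set.Icc (0:ℝ) lam0 := ⟨hlam.le, hlamle⟩
  have hn00 : ⟪ψ0, ψ0⟫_ℂ = 1 := hnorm 0 hmem0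
  have hnl : ⟪ψ0, ψ lam⟫_ℂ = 1 := hnorm lam hmeml
  have hlamne : (lam:ℂ) ≠ 0 := by
    exact_mod_cast Complex.ofReal_ne_zero.mpr hlam.ne'
  -- R ψ0 = 0
  have hRψ0 : R ψ0 = 0 := by
    have h2 := hR2 ψ0
    rw [hn00, one_smul, sub_self] at h2
    have h3 := hR3 (R ψ0)
    rw [h2, map_zero, hR1, zero_smul, sub_zero] at h3
    exact h3.symm
  set w := ψ lam - ψ0 with hw
  have hψsum : ψ lam = ψ0 + w := by rw [hw]; abel
  set f1 : ℂ := Ebr 1 lam with hf1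
  set u : 𝓗 := f1 • ψ lam - V (ψ lam) with hu
  -- the key resolvent identity
  have hEdiff : ((E lam : ℂ) - (E 0 : ℂ)) = (lam:ℂ) * f1 := by
    have h := hEbrS 0 lam
    rw [hEbr0, hEs0] at h
    rw [hf1, h]
    field_simp
  have hstar : w = (lam:ℂ) • R u := by
    have h1 : H₀ (ψ lam) - (E 0 : ℂ) • ψ lam
        = ((E lam : ℂ) - (E 0:ℂ)) • ψ lam - (lam:ℂ) • V (ψ lam) := by
      have h := heig lam hmeml
      rw [sub_smul]
      rw [eq_sub_of_add_eq h]
      abel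
    have h3 := hR3 (ψ lam)
    rw [hnl, one_smul] at h3
    rw [hw, ← h3, h1, hEdiff, hu, mul_smul, ← smul_sub, map_smul]
  have hw0 : w = (lam:ℂ) • (K 0) u := by rw [hK0]; exact hstar
  have hK0ψ0 : (K 0) ψ0 = 0 := by rw [hK0]; exact hRψ0
  have hKψ0 : ∀ m, m ≤ n - 1 → (K m) ψ0 = 0 := by
    intro m hmn
    rcases Nat.eq_zero_or_pos m with h0 | h1
    · subst h0; exact hK0ψ0
    · rw [hK m h1 hmn]
      simp [LinearMap.sum_apply, Module.End.mul_apply, hK0ψ0]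
  -- key step identity
  have hstep : ∀ m, 1 ≤ m → m + 1 ≤ n →
      (Rk m lam) w = (lam:ℂ) • (-(K m) (V ψ0) + (Rk (m+1) lam) w) := by
    intro m hm1 hmn
    have hmn' : m ≤ n - 1 := by omega
    have hA : (Rk (m+1) lam) w
        = (∑ j ∈ Finset.Icc 1 m, Ebr (m+2-j) lam • (K (j-1)) w)
          + (K m) (f1 • w - V w) := by
      rw [hRk]
      rw [Finset.sum_Icc_succ_top (by omega : 1 ≤ m+1)]
      simp only [LinearMap.add_apply, LinearMap.sum_apply, Module.End.mul_apply,
        LinearMap.sub_apply, LinearMap.smul_apply, Module.End.one_apply]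
      congr 1
      · apply Finset.sum_congr rfl
        intro j hj
        obtain ⟨hj1, hjm⟩ := Finset.mem_Icc.mp hj
        have hne : j ≠ m + 1 := by omega
        have hidx : m + 1 + 1 - j = m + 2 - j := by omega
        rw [hidx, if_neg hne]
        simp [map_smul]
      · have h1 : m + 1 + 1 - (m+1) = 1 := by omega
        have h2 : m + 1 - 1 = m := by omega
        rw [h1, h2, hf1]
        simp
    have hB : (Rk m lam) w = (lam:ℂ) • (K m) u
        + (lam:ℂ) • ∑ j ∈ Finset.Icc 1 m, Ebr (m+2-j) lam • (K (j-1)) w := by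
      rw [hRk, hK m hm1 hmn']
      simp only [LinearMap.sum_apply, Module.End.mul_apply, LinearMap.sub_apply,
        LinearMap.smul_apply, Module.End.one_apply, Finset.smul_sum]
      rw [← Finset.sum_add_distrib]
      apply Finset.sum_congr rfl
      intro j hj
      obtain ⟨hj1, hjm⟩ := Finset.mem_Icc.mp hj
      have hfe : Ebr (m+1-j) lam = Es (m+1-j) + (lam:ℂ) * Ebr (m+2-j) lam := by
        have h := hEbrS (m+1-j) lam
        have hidx : m+1-j+1 = m+2-j := by omega
        rw [hidx] at h
        rw [h]
        field_simp
        ring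
      rw [hfe]
      set D : Module.End ℂ 𝓗 := if j = m then V else 0 with hD
      set e : ℂ := Es (m+1-j) with he
      set f' : ℂ := Ebr (m+2-j) lam with hf'
      set B : Module.End ℂ 𝓗 := K (j-1) with hB'
      -- goal : B ((e + lam*f') • w - D w) = lam • B (e • (K 0) u - D ((K 0) u)) + lam • (f' • B w)
      rw [hw0]
      simp only [map_smul, map_sub, map_add, smul_sub, smul_add, add_smul, smul_smul]
      module
    have huK : (K m) u = -(K m) (V ψ0) + (K m) (f1 • w - V w) := by
      have hKmψ0 : (K m) ψ0 = 0 := hKψ0 m hmn'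
      conv_lhs => rw [hu, hψsum]
      simp only [map_add, map_sub, map_smul, smul_add, hKmψ0, smul_zero]
      abel
    rw [hB, hA, huK]
    simp only [smul_add, smul_sub, smul_neg]
    abel
  -- vector-level expansion
  have hS : ∀ k, 1 ≤ k → k ≤ n →
      w = -(∑ j ∈ Finset.Icc 1 k, (lam:ℂ)^j • (K (j-1)) (V ψ0))
        + (lam:ℂ)^k • (Rk k lam) w := by
    intro k hk
    induction k, hk using Nat.le_induction with
    | base =>
      intro _
      have hRk1 : (Rk 1 lam) w = f1 • (K 0) w - (K 0) (V w) := by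
        rw [hRk]
        simp [LinearMap.sum_apply, Module.End.mul_apply, LinearMap.sub_apply,
          LinearMap.smul_apply, Module.End.one_apply, map_smul, map_sub, hf1]
      rw [hRk1, Finset.Icc_self, Finset.sum_singleton, pow_one]
      conv_lhs => rw [hw0, hu, hψsum]
      simp only [map_add, map_sub, map_smul, smul_add, smul_sub, hK0ψ0, smul_zero]
      abel
    | succ m hm ih =>
      intro hmn
      have ihh := ih (by omega)
      have hst := hstep m hm hmn
      rw [Finset.sum_Icc_succ_top (by omega : 1 ≤ m+1)]
      have hidx : m + 1 - 1 = m := by omega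
      rw [hidx]
      calc w = -(∑ j ∈ Finset.Icc 1 m, (lam:ℂ)^j • (K (j-1)) (V ψ0))
              + (lam:ℂ)^m • (Rk m lam) w := ihh
        _ = _ := by
            rw [hst, pow_succ]
            simp only [smul_add, smul_neg, smul_smul, neg_add]
            abel
  -- apply P0 ∘ V
  obtain ⟨Q, hQdef⟩ : ∃ Q : 𝓗 →ₗ[ℂ] 𝓗, ∀ x, Q x = ⟪ψ0, V x⟫_ℂ • ψ0 :=
    ⟨{ toFun := fun x => ⟪ψ0, V x⟫_ℂ • ψ0,
       map_add' := fun x y => by simp [inner_add_right, add_smul],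
       map_smul' := fun c x => by simp [inner_smul_right, smul_smul] }, fun _ => rfl⟩
  have hPV : ∀ x, P0 (V x) = Q x := fun x => by rw [hP0, hQdef]
  have hP0ψ : P0 (ψ lam) = ψ0 := by rw [hP0, hnl, one_smul]
  have hPb : Pbar (ψ lam) = w := by rw [hPbar, hP0ψ, hw]
  rw [hPb]
  simp only [hP0ψ, hPV]
  conv_lhs => rw [hS k hk1 hkn]
  simp only [map_add, map_neg, map_sum, map_smul]
end

section
/- Let X ⊂ ℤ be finite, let π be a (𝓥,𝓡)-valued graph function on X with external lines, and let I, J ⊆ X be disjoint subsets each consisting of consecutive elements of X. Then for any F_I, F_J ∈ 𝓡 the two substitutions commute: subst_{I→F_I}( subst_{J→F_J}(π) ) = subst_{J→F_J}( subst_{I→F_I}(π) ). -/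
noncomputable section

/-- Extended integers `ℤ ∪ {-∞, +∞}`, used as endpoints of edges of graph
functions with external lines (`-∞ = ⊥`). -/
abbrev Ez : Type := WithBot (WithTop ℤ)

/-- Embedding of `ℤ` into the extended integers. -/
def toEz (x : ℤ) : Ez := ((x : WithTop ℤ) : Ez)

/-- The left endpoint of the edge bridging `I` inside `X`: the largest element
of `X` lying strictly below all of `I`, or `-∞` if there is none. -/
def leftEnd (X I : Finset ℤ) : Ez :=
  WithBot.map (fun z : ℤ => (z : WithTop ℤ)) (X.filter fun y => ∀ i ∈ I, y < i).max

/-- The right endpoint of the edge bridging `I` inside `X`: the smallest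
element of `X` lying strictly above all of `I`, or `+∞` if there is none. -/
def rightEnd (X I : Finset ℤ) : Ez :=
  (((X.filter fun y => ∀ i ∈ I, i < y).min : WithTop ℤ) : Ez)

/-- `min I` as an extended integer. -/
def minEz (I : Finset ℤ) : Ez := ((I.min : WithTop ℤ) : Ez)

/-- `max I` as an extended integer. -/
def maxEz (I : Finset ℤ) : Ez := WithBot.map (fun z : ℤ => (z : WithTop ℤ)) I.max

/-- The edge set (with external lines) `Ē_Y` of a finite set `Y ⊂ ℤ`:
nearest-neighbour edges of `Y` together with the two external edges
`(-∞, min Y)` and `(max Y, +∞)`; an edge is recorded as the ordered pair of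
its endpoints. -/
def extEdges (Y : Finset ℤ) : Set (Ez × Ez) :=
  {p | (∃ x ∈ Y, ∃ y ∈ Y, x < y ∧ (∀ z ∈ Y, ¬(x < z ∧ z < y)) ∧
          p = (toEz x, toEz y)) ∨
       (∃ x ∈ Y, (∀ z ∈ Y, ¬ z < x) ∧ p = ((⊥ : Ez), toEz x)) ∨
       (∃ x ∈ Y, (∀ z ∈ Y, ¬ x < z) ∧ p = (toEz x, ((⊤ : WithTop ℤ) : Ez)))}

/-- The edge-label part of the substitution `subst_{I → K}` performed on a
graph function with external lines on `X`: the two edges adjacent to `I`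
together with the part of the graph on `I` are replaced by the single bridging
edge, labelled `F(left, min I) * K * F(max I, right)`; all edge labels of
edges not touching `I` are unchanged.  (The vertex labels are untouched, so
only the edge labels have to be transformed.) -/
def substF {𝓡 : Type*} [Monoid 𝓡] (X I : Finset ℤ) (K : 𝓡)
    (F : Ez × Ez → 𝓡) : Ez × Ez → 𝓡 := fun p =>
  if p = (leftEnd X I, rightEnd X I) then
    F (leftEnd X I, minEz I) * K * F (maxEz I, rightEnd X I)
  else F p

/- ------------------ auxiliary lemmas ------------------- -/

lemma toEz_lt_toEz {a b : ℤ} (h : a < b) : toEz a < toEz b := by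
  unfold toEz; exact_mod_cast h

lemma toEz_injective : Function.Injective toEz := by
  intro a b h
  unfold toEz at h
  exact_mod_cast h

lemma bot_ne_toEz (a : ℤ) : (⊥ : Ez) ≠ toEz a := by
  unfold toEz; exact (WithBot.bot_ne_coe)

lemma toEz_ne_top (a : ℤ) : toEz a ≠ (((⊤ : WithTop ℤ)) : Ez) := by
  unfold toEz
  intro h
  exact WithTop.coe_ne_top (WithBot.coe_injective h)

lemma lt_rightEnd {X I : Finset ℤ} {i : ℤ} (hi : i ∈ I) : toEz i < rightEnd X I := by
  unfold rightEnd toEz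
  rcases h : (X.filter fun y => ∀ i ∈ I, i < y).min with _ | r
  · exact WithBot.coe_lt_coe.mpr (WithTop.coe_lt_top i)
  · have hr := Finset.mem_of_min h
    rw [Finset.mem_filter] at hr
    show ((i : WithTop ℤ) : Ez) < ((r : WithTop ℤ) : Ez)
    exact WithBot.coe_lt_coe.mpr (WithTop.coe_lt_coe.mpr (hr.2 i hi))

lemma leftEnd_lt {X I : Finset ℤ} {i : ℤ} (hi : i ∈ I) : leftEnd X I < toEz i := by
  unfold leftEnd toEz
  rcases h : (X.filter fun y => ∀ i ∈ I, y < i).max with _ | l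
  · exact WithBot.bot_lt_coe _
  · have hl := Finset.mem_of_max h
    rw [Finset.mem_filter] at hl
    show ((l : WithTop ℤ) : Ez) < ((i : WithTop ℤ) : Ez)
    exact WithBot.coe_lt_coe.mpr (WithTop.coe_lt_coe.mpr (hl.2 i hi))

lemma rightEnd_eq {X I : Finset ℤ} {a : ℤ} (haX : a ∈ X) (ha : ∀ i ∈ I, i < a)
    (h : ∀ b ∈ X, (∀ i ∈ I, i < b) → a ≤ b) : rightEnd X I = toEz a := by
  unfold rightEnd toEz
  have hmin : (X.filter fun y => ∀ i ∈ I, i < y).min = (a : WithTop ℤ) := by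
    refine le_antisymm (Finset.min_le ?_) (Finset.le_min ?_)
    · exact Finset.mem_filter.mpr ⟨haX, ha⟩
    · intro b hb
      rw [Finset.mem_filter] at hb
      exact_mod_cast h b hb.1 hb.2
  rw [hmin]

lemma leftEnd_eq {X I : Finset ℤ} {a : ℤ} (haX : a ∈ X) (ha : ∀ i ∈ I, a < i)
    (h : ∀ b ∈ X, (∀ i ∈ I, b < i) → b ≤ a) : leftEnd X I = toEz a := by
  unfold leftEnd toEz
  have hmax : (X.filter fun y => ∀ i ∈ I, y < i).max = (a : WithBot ℤ) := by
    refine le_antisymm (Finset.max_le ?_) (Finset.le_max ?_)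
    · intro b hb
      rw [Finset.mem_filter] at hb
      exact_mod_cast h b hb.1 hb.2
    · exact Finset.mem_filter.mpr ⟨haX, ha⟩
  rw [hmax, WithBot.map_coe]

lemma leftEnd_congr {X X' I I' : Finset ℤ}
    (h : (X.filter fun y => ∀ i ∈ I, y < i) = (X'.filter fun y => ∀ i ∈ I', y < i)) :
    leftEnd X I = leftEnd X' I' := by unfold leftEnd; rw [h]

lemma rightEnd_congr {X X' I I' : Finset ℤ}
    (h : (X.filter fun y => ∀ i ∈ I, i < y) = (X'.filter fun y => ∀ i ∈ I', i < y)) :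
    rightEnd X I = rightEnd X' I' := by unfold rightEnd; rw [h]

/- ------------------ the key lemma (ordered version) ------------------- -/

lemma key_stmt6 {𝓡 : Type*} [Monoid 𝓡]
    (X I J : Finset ℤ)
    (hIX : I ⊆ X) (hJX : J ⊆ X)
    (hIne : I.Nonempty) (hJne : J.Nonempty)
    (hIcons : ∀ a ∈ I, ∀ c ∈ I, ∀ b ∈ X, a ≤ b → b ≤ c → b ∈ I)
    (hJcons : ∀ a ∈ J, ∀ c ∈ J, ∀ b ∈ X, a ≤ b → b ≤ c → b ∈ J)
    (F : Ez × Ez → 𝓡) (KI KJ : 𝓡)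
    (hlt : ∀ i ∈ I, ∀ j ∈ J, i < j) :
    ∀ p ∈ extEdges ((X \ I) \ J),
      substF (X \ J) I KI (substF X J KJ F) p =
        substF (X \ I) J KJ (substF X I KI F) p := by
  classical
  set iMin := I.min' hIne with hiMin
  set iMax := I.max' hIne with hiMax
  set jMin := J.min' hJne with hjMin
  set jMax := J.max' hJne with hjMax
  have hiMinI : iMin ∈ I := I.min'_mem hIne
  have hiMaxI : iMax ∈ I := I.max'_mem hIne
  have hjMinJ : jMin ∈ J := J.min'_mem hJne
  have hjMaxJ : jMax ∈ J := J.max'_mem hJne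
  have hIl : ∀ i ∈ I, iMin ≤ i := fun i hi => Finset.min'_le _ _ hi
  have hIu : ∀ i ∈ I, i ≤ iMax := fun i hi => Finset.le_max' _ _ hi
  have hJl : ∀ j ∈ J, jMin ≤ j := fun j hj => Finset.min'_le _ _ hj
  have hJu : ∀ j ∈ J, j ≤ jMax := fun j hj => Finset.le_max' _ _ hj
  have hIJ : iMax < jMin := hlt _ hiMaxI _ hjMinJ
  have hmI : minEz I = toEz iMin := by
    unfold minEz toEz; rw [← Finset.coe_min' hIne]
  have hMI : maxEz I = toEz iMax := by
    unfold maxEz toEz; rw [← Finset.coe_max' hIne, WithBot.map_coe]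
  have hmJ : minEz J = toEz jMin := by
    unfold minEz toEz; rw [← Finset.coe_min' hJne]
  have hMJ : maxEz J = toEz jMax := by
    unfold maxEz toEz; rw [← Finset.coe_max' hJne, WithBot.map_coe]
  have hLI : leftEnd (X \ J) I = leftEnd X I := by
    apply leftEnd_congr
    ext y
    simp only [Finset.mem_filter, Finset.mem_sdiff]
    constructor
    · rintro ⟨⟨hyX, _⟩, hy⟩; exact ⟨hyX, hy⟩
    · rintro ⟨hyX, hy⟩
      refine ⟨⟨hyX, fun hyJ => ?_⟩, hy⟩
      exact absurd (hy iMin hiMinI) (not_lt.mpr (le_of_lt (hlt _ hiMinI _ hyJ)))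
  have hRJ : rightEnd (X \ I) J = rightEnd X J := by
    apply rightEnd_congr
    ext y
    simp only [Finset.mem_filter, Finset.mem_sdiff]
    constructor
    · rintro ⟨⟨hyX, _⟩, hy⟩; exact ⟨hyX, hy⟩
    · rintro ⟨hyX, hy⟩
      refine ⟨⟨hyX, fun hyI => ?_⟩, hy⟩
      exact absurd (hy jMin hjMinJ) (not_lt.mpr (le_of_lt (hlt _ hyI _ hjMinJ)))
  by_cases hadj : ∀ y ∈ X, ¬(iMax < y ∧ y < jMin)
  · -- adjacent case
    have hRXI : rightEnd X I = toEz jMin := by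
      apply rightEnd_eq (hJX hjMinJ) (fun i hi => hlt _ hi _ hjMinJ)
      intro b hb hbI
      by_contra hbj
      push_neg at hbj
      exact hadj b hb ⟨hbI iMax hiMaxI, hbj⟩
    have hLXJ : leftEnd X J = toEz iMax := by
      apply leftEnd_eq (hIX hiMaxI) (fun j hj => hlt _ hiMaxI _ hj)
      intro b hb hbJ
      by_contra hbi
      push_neg at hbi
      exact hadj b hb ⟨hbi, hbJ jMin hjMinJ⟩
    have hRI' : rightEnd (X \ J) I = rightEnd X J := by
      apply rightEnd_congr
      ext y
      simp only [Finset.mem_filter, Finset.mem_sdiff]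
      constructor
      · rintro ⟨⟨hyX, hyJ⟩, hy⟩
        refine ⟨hyX, fun j hj => lt_of_le_of_lt (hJu j hj) ?_⟩
        rcases lt_or_ge jMax y with h' | h'
        · exact h'
        · exfalso
          rcases lt_or_ge y jMin with h'' | h''
          · exact hadj y hyX ⟨hy iMax hiMaxI, h''⟩
          · exact hyJ (hJcons _ hjMinJ _ hjMaxJ _ hyX h'' h')
      · rintro ⟨hyX, hy⟩
        exact ⟨⟨hyX, fun hyJ => lt_irrefl y (hy y hyJ)⟩,
          fun i hi => lt_trans (hlt _ hi _ hjMinJ) (hy _ hjMinJ)⟩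
    have hLJ' : leftEnd (X \ I) J = leftEnd X I := by
      apply leftEnd_congr
      ext y
      simp only [Finset.mem_filter, Finset.mem_sdiff]
      constructor
      · rintro ⟨⟨hyX, hyI⟩, hy⟩
        refine ⟨hyX, fun i hi => lt_of_lt_of_le ?_ (hIl i hi)⟩
        rcases lt_or_ge y iMin with h' | h'
        · exact h'
        · exfalso
          rcases le_or_gt y iMax with h'' | h''
          · exact hyI (hIcons _ hiMinI _ hiMaxI _ hyX h' h'')
          · exact hadj y hyX ⟨h'', hy jMin hjMinJ⟩
      · rintro ⟨hyX, hy⟩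
        exact ⟨⟨hyX, fun hyI => lt_irrefl y (hy y hyI)⟩,
          fun j hj => lt_trans (hy iMin hiMinI)
            (lt_of_le_of_lt (hIl iMax hiMaxI) (hlt _ hiMaxI _ hj))⟩
    intro p hp
    by_cases hpe : p = (leftEnd X I, rightEnd X J)
    · -- the interesting case: the merged bridging edge
      have hne1 : ((leftEnd X I, toEz iMin) : Ez × Ez) ≠ (toEz iMax, rightEnd X J) :=
        fun h => absurd (congrArg Prod.fst h) (ne_of_lt (leftEnd_lt hiMaxI))
      have hne2 : ((toEz jMax, rightEnd X J) : Ez × Ez) ≠ (leftEnd X I, toEz jMin) :=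
        fun h => absurd (congrArg Prod.fst h)
          (ne_of_gt (lt_trans (leftEnd_lt hiMaxI) (toEz_lt_toEz (lt_of_lt_of_le hIJ (hJl _ hjMaxJ)))))
      subst hpe
      simp only [substF]
      rw [hLI, hRI', hLXJ, hRXI, hLJ', hRJ, hmI, hMI, hmJ, hMJ]
      rw [if_pos rfl, if_neg hne1, if_pos rfl, if_pos rfl, if_pos rfl, if_neg hne2]
      simp [mul_assoc]
    · -- any other edge of the final graph
      have hfst : p.1 ≠ toEz iMax := by
        rcases hp with ⟨x, hx, y, hy, hxy, hmid, rfl⟩ | ⟨x, hx, hmin, rfl⟩ | ⟨x, hx, hmax, rfl⟩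
        · intro h
          have hx' := toEz_injective h
          subst hx'
          rw [Finset.mem_sdiff, Finset.mem_sdiff] at hx
          exact hx.1.2 hiMaxI
        · exact bot_ne_toEz _
        · intro h
          have hx' := toEz_injective h
          subst hx'
          rw [Finset.mem_sdiff, Finset.mem_sdiff] at hx
          exact hx.1.2 hiMaxI
      have hsnd : p.2 ≠ toEz jMin := by
        rcases hp with ⟨x, hx, y, hy, hxy, hmid, rfl⟩ | ⟨x, hx, hmin, rfl⟩ | ⟨x, hx, hmax, rfl⟩
        · intro h
          have hy' := toEz_injective h
          subst hy'
          rw [Finset.mem_sdiff, Finset.mem_sdiff] at hy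
          exact hy.2 hjMinJ
        · intro h
          have hx' := toEz_injective h
          subst hx'
          rw [Finset.mem_sdiff, Finset.mem_sdiff] at hx
          exact hx.2 hjMinJ
        · exact fun h => toEz_ne_top _ h.symm
      have h1 : p ≠ (toEz iMax, rightEnd X J) := fun h => hfst (congrArg Prod.fst h)
      have h2 : p ≠ (leftEnd X I, toEz jMin) := fun h => hsnd (congrArg Prod.snd h)
      simp only [substF]
      rw [hLI, hRI', hLXJ, hRXI, hLJ', hRJ]
      rw [if_neg hpe, if_neg h1, if_neg hpe, if_neg h2]
  · -- non-adjacent case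
    push_neg at hadj
    obtain ⟨w0, hw0X, hw0⟩ := hadj
    set S := X.filter (fun y => iMax < y ∧ y < jMin) with hSdef
    have hSne : S.Nonempty := ⟨w0, Finset.mem_filter.mpr ⟨hw0X, hw0⟩⟩
    set w := S.min' hSne with hwdef
    set w' := S.max' hSne with hw'def
    have hwS : w ∈ S := S.min'_mem hSne
    have hw'S : w' ∈ S := S.max'_mem hSne
    rw [hSdef, Finset.mem_filter] at hwS hw'S
    have hRXI : rightEnd X I = toEz w := by
      apply rightEnd_eq hwS.1 (fun i hi => lt_of_le_of_lt (hIu i hi) hwS.2.1)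
      intro b hb hbI
      rcases lt_or_ge b jMin with h' | h'
      · exact Finset.min'_le S b (Finset.mem_filter.mpr ⟨hb, hbI iMax hiMaxI, h'⟩)
      · exact le_of_lt (lt_of_lt_of_le hwS.2.2 h')
    have hRI' : rightEnd (X \ J) I = toEz w := by
      apply rightEnd_eq (Finset.mem_sdiff.mpr
        ⟨hwS.1, fun hwJ => absurd (hJl w hwJ) (not_le.mpr hwS.2.2)⟩)
        (fun i hi => lt_of_le_of_lt (hIu i hi) hwS.2.1)
      intro b hb hbI
      rw [Finset.mem_sdiff] at hb
      rcases lt_or_ge b jMin with h' | h'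
      · exact Finset.min'_le S b (Finset.mem_filter.mpr ⟨hb.1, hbI iMax hiMaxI, h'⟩)
      · exact le_of_lt (lt_of_lt_of_le hwS.2.2 h')
    have hLXJ : leftEnd X J = toEz w' := by
      apply leftEnd_eq hw'S.1 (fun j hj => lt_of_lt_of_le hw'S.2.2 (hJl j hj))
      intro b hb hbJ
      rcases lt_or_ge iMax b with h' | h'
      · exact Finset.le_max' S b (Finset.mem_filter.mpr ⟨hb, h', hbJ jMin hjMinJ⟩)
      · exact le_trans h' (le_of_lt hw'S.2.1)
    have hLJ' : leftEnd (X \ I) J = toEz w' := by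
      apply leftEnd_eq (Finset.mem_sdiff.mpr
        ⟨hw'S.1, fun hw'I => absurd (hIu w' hw'I) (not_le.mpr hw'S.2.1)⟩)
        (fun j hj => lt_of_lt_of_le hw'S.2.2 (hJl j hj))
      intro b hb hbJ
      rw [Finset.mem_sdiff] at hb
      rcases lt_or_ge iMax b with h' | h'
      · exact Finset.le_max' S b (Finset.mem_filter.mpr ⟨hb.1, h', hbJ jMin hjMinJ⟩)
      · exact le_trans h' (le_of_lt hw'S.2.1)
    have hLltw' : leftEnd X I < toEz w' :=
      lt_trans (leftEnd_lt hiMaxI) (toEz_lt_toEz hw'S.2.1)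
    have hwltR : toEz w < rightEnd X J :=
      lt_trans (toEz_lt_toEz hwS.2.2) (lt_rightEnd hjMinJ)
    have hne_eIJ : ((leftEnd X I, toEz w) : Ez × Ez) ≠ (toEz w', rightEnd X J) :=
      fun h => absurd (congrArg Prod.snd h) (ne_of_lt hwltR)
    intro p hp
    by_cases hp1 : p = (leftEnd X I, toEz w)
    · -- p is the bridging edge of I
      have hneA : ((leftEnd X I, toEz iMin) : Ez × Ez) ≠ (toEz w', rightEnd X J) :=
        fun h => absurd (congrArg Prod.fst h) (ne_of_lt hLltw')
      have hneB : ((toEz iMax, toEz w) : Ez × Ez) ≠ (toEz w', rightEnd X J) :=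
        fun h => absurd (congrArg Prod.fst h)
          (fun h' => absurd (toEz_injective h') (ne_of_lt hw'S.2.1))
      subst hp1
      simp only [substF]
      rw [hLI, hRI', hLXJ, hRXI, hLJ', hRJ, hmI, hMI, hmJ, hMJ]
      rw [if_pos rfl, if_neg hneA, if_neg hneB, if_neg hne_eIJ, if_pos rfl]
    · by_cases hp2 : p = (toEz w', rightEnd X J)
      · -- p is the bridging edge of J
        have hneC : ((toEz w', toEz jMin) : Ez × Ez) ≠ (leftEnd X I, toEz w) :=
          fun h => absurd (congrArg Prod.snd h)
            (fun h' => absurd (toEz_injective h') (ne_of_gt hwS.2.2))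
        have hneD : ((toEz jMax, rightEnd X J) : Ez × Ez) ≠ (leftEnd X I, toEz w) :=
          fun h => absurd (congrArg Prod.fst h)
            (ne_of_gt (lt_trans (leftEnd_lt hiMaxI)
              (toEz_lt_toEz (lt_of_lt_of_le hIJ (hJl _ hjMaxJ)))))
        subst hp2
        simp only [substF]
        rw [hLI, hRI', hLXJ, hRXI, hLJ', hRJ, hmI, hMI, hmJ, hMJ]
        rw [if_neg hne_eIJ.symm, if_pos rfl, if_pos rfl, if_neg hneC, if_neg hneD]
      · -- any other edge
        simp only [substF]
        rw [hLI, hRI', hLXJ, hRXI, hLJ', hRJ]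
        rw [if_neg hp1, if_neg hp2, if_neg hp2, if_neg hp1]

/- ------------------ the theorem ------------------- -/

/-- **Commutativity of substitutions (Lemma 4.4).**
Let `X ⊂ ℤ` be finite, let `π = ((V_x)_{x∈X}, (F_e)_{e∈Ē_X})` be a
`(𝓥,𝓡)`-valued graph function on `X` with external lines, and let `I, J ⊆ X`
be disjoint (nonempty) subsets each consisting of consecutive elements of `X`.
Then for any `K_I, K_J ∈ 𝓡` the two substitutions commute:
`subst_{I→K_I}(subst_{J→K_J}(π)) = subst_{J→K_J}(subst_{I→K_I}(π))`, i.e. the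
two resulting graph functions on `X ∖ I ∖ J` have the same (unchanged) vertex
labels and the same label on every edge of `Ē_{X∖I∖J}`. -/
theorem stmt6 {𝓥 𝓡 : Type*} [Monoid 𝓡]
    (X I J : Finset ℤ)
    (hIX : I ⊆ X) (hJX : J ⊆ X) (hdisj : Disjoint I J)
    (hIne : I.Nonempty) (hJne : J.Nonempty)
    (hIcons : ∀ a ∈ I, ∀ c ∈ I, ∀ b ∈ X, a ≤ b → b ≤ c → b ∈ I)
    (hJcons : ∀ a ∈ J, ∀ c ∈ J, ∀ b ∈ X, a ≤ b → b ≤ c → b ∈ J)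
    (v : ℤ → 𝓥) (F : Ez × Ez → 𝓡) (KI KJ : 𝓡) :
    ∀ p ∈ extEdges ((X \ I) \ J),
      substF (X \ J) I KI (substF X J KJ F) p =
        substF (X \ I) J KJ (substF X I KI F) p := by
  have htot : (∀ i ∈ I, ∀ j ∈ J, i < j) ∨ (∀ j ∈ J, ∀ i ∈ I, j < i) := by
    rcases lt_or_ge (I.max' hIne) (J.min' hJne) with h | h
    · left; intro i hi j hj
      exact lt_of_le_of_lt (Finset.le_max' I i hi) (lt_of_lt_of_le h (Finset.min'_le J j hj))
    · rcases lt_or_ge (J.max' hJne) (I.min' hIne) with h2 | h2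
      · right; intro j hj i hi
        exact lt_of_le_of_lt (Finset.le_max' J j hj) (lt_of_lt_of_le h2 (Finset.min'_le I i hi))
      · exfalso
        rcases le_or_gt (I.min' hIne) (J.min' hJne) with hc | hc
        · exact Finset.disjoint_left.mp hdisj
            (hIcons _ (I.min'_mem hIne) _ (I.max'_mem hIne) _ (hJX (J.min'_mem hJne)) hc h)
            (J.min'_mem hJne)
        · exact Finset.disjoint_left.mp hdisj (I.min'_mem hIne)
            (hJcons _ (J.min'_mem hJne) _ (J.max'_mem hJne) _ (hIX (I.min'_mem hIne))
              (le_of_lt hc) h2)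
  rcases htot with h | h
  · exact key_stmt6 X I J hIX hJX hIne hJne hIcons hJcons F KI KJ h
  · intro p hp
    exact (key_stmt6 X J I hJX hIX hJne hIne hJcons hIcons F KJ KI h p
      (by rw [sdiff_sdiff_comm]; exact hp)).symm
end
end

section
/- Let X ⊂ ℤ be a finite set containing at least four elements, let P be a linked pair partition of X, and let p ∈ P. Then there exists a pair q ∈ P with q ≠ p such that P ∖ {q} is a linked pair partition of X ∖ q. -/
def IsPairPartition (X : Finset ℤ) (P : Finset (Finset ℤ)) : Prop :=
  (∀ p ∈ P, p.card = 2) ∧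
  (∀ p ∈ P, ∀ q ∈ P, p ≠ q → Disjoint p q) ∧
  P.biUnion id = X

def LinkedPairs (p q : Finset ℤ) : Prop :=
  p ≠ q ∧ (∃ a ∈ p, ∃ b ∈ q, ∃ c ∈ q, b ≤ a ∧ a ≤ c) ∧
    (∃ a ∈ q, ∃ b ∈ p, ∃ c ∈ p, b ≤ a ∧ a ≤ c)

def LinkStep (P : Finset (Finset ℤ)) (p q : Finset ℤ) : Prop :=
  p ∈ P ∧ q ∈ P ∧ LinkedPairs p q

def IsLinked (P : Finset (Finset ℤ)) : Prop :=
  ∀ p ∈ P, ∀ q ∈ P, Relation.ReflTransGen (LinkStep P) p q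

def stepsN (r : Finset ℤ → Finset ℤ → Prop) : ℕ → Finset ℤ → Finset ℤ → Prop
  | 0, a, b => a = b
  | (n+1), a, b => ∃ c, stepsN r n a c ∧ r c b

lemma rtg_iff_stepsN {r : Finset ℤ → Finset ℤ → Prop} {a b : Finset ℤ} :
    Relation.ReflTransGen r a b ↔ ∃ n, stepsN r n a b := by
  constructor
  · intro h
    induction h with
    | refl => exact ⟨0, rfl⟩
    | tail _ hstep ih =>
      obtain ⟨n, hn⟩ := ih
      exact ⟨n + 1, _, hn, hstep⟩
  · rintro ⟨n, h⟩
    induction n generalizing b with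
    | zero => exact h ▸ Relation.ReflTransGen.refl
    | succ n ih =>
      obtain ⟨c, hc, hcb⟩ := h
      exact (ih hc).tail hcb

lemma LinkedPairs.symm' {p q : Finset ℤ} (h : LinkedPairs p q) : LinkedPairs q p :=
  ⟨h.1.symm, h.2.2, h.2.1⟩

lemma LinkStep.symm' {P : Finset (Finset ℤ)} {p q : Finset ℤ}
    (h : LinkStep P p q) : LinkStep P q p :=
  ⟨h.2.1, h.1, h.2.2.symm'⟩

open Classical

noncomputable def ldist (P : Finset (Finset ℤ)) (p a : Finset ℤ) : ℕ :=
  if h : ∃ n, stepsN (LinkStep P) n p a then Nat.find h else 0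

lemma ldist_spec {P : Finset (Finset ℤ)} {p a : Finset ℤ}
    (h : ∃ n, stepsN (LinkStep P) n p a) :
    stepsN (LinkStep P) (ldist P p a) p a := by
  rw [ldist]; rw [dif_pos h]; exact Nat.find_spec h

lemma ldist_le {P : Finset (Finset ℤ)} {p a : Finset ℤ} {n : ℕ}
    (h : stepsN (LinkStep P) n p a) : ldist P p a ≤ n := by
  rw [ldist]; rw [dif_pos ⟨n, h⟩]; exact Nat.find_le h

/-- **Lemma 4.8.** Let `X ⊂ ℤ` be finite with at least four elements, let `P`
be a linked pair partition of `X` and let `p ∈ P`.  Then there exists a pair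
`q ∈ P`, `q ≠ p`, such that `P ∖ {q}` is again a linked pair partition of
`X ∖ q`. -/
theorem stmt7 (X : Finset ℤ) (hX : 4 ≤ X.card)
    (P : Finset (Finset ℤ)) (hP : IsPairPartition X P) (hPlinked : IsLinked P)
    (p : Finset ℤ) (hp : p ∈ P) :
    ∃ q ∈ P, q ≠ p ∧ IsPairPartition (X \ q) (P.erase q) ∧ IsLinked (P.erase q) := by
  obtain ⟨hcards, hdisj, hunion⟩ := hP
  -- X.card = 2 * P.card
  have hXcard : X.card = 2 * P.card := by
    have h1 : (P.biUnion id).card = ∑ r ∈ P, (id r).card :=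
      Finset.card_biUnion (fun a ha b hb hab => hdisj a ha b hb hab)
    rw [← hunion, h1]
    simp only [id]
    rw [Finset.sum_congr rfl (fun r hr => hcards r hr)]
    simp [mul_comm]
  have hPcard : 2 ≤ P.card := by omega
  have hne : (P.erase p).Nonempty := by
    rw [← Finset.card_pos, Finset.card_erase_of_mem hp]; omega
  -- existence of paths
  have hall : ∀ a ∈ P, ∃ n, stepsN (LinkStep P) n p a := fun a ha =>
    rtg_iff_stepsN.mp (hPlinked p hp a ha)
  have hd0 : ldist P p p = 0 := Nat.le_zero.mp (ldist_le rfl)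
  -- pick q at maximal distance
  obtain ⟨q, hqmem, hqmax⟩ := Finset.exists_max_image (P.erase p) (ldist P p) hne
  have hqP : q ∈ P := Finset.mem_of_mem_erase hqmem
  have hqp : q ≠ p := Finset.ne_of_mem_erase hqmem
  have hpq : p ∈ P.erase q := Finset.mem_erase.mpr ⟨fun h => hqp h.symm, hp⟩
  refine ⟨q, hqP, hqp, ?_, ?_⟩
  · refine ⟨fun r hr => hcards r (Finset.mem_of_mem_erase hr),
      fun a ha b hb hab => hdisj a (Finset.mem_of_mem_erase ha) b (Finset.mem_of_mem_erase hb) hab,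
      ?_⟩
    ext x
    simp only [Finset.mem_biUnion, Finset.mem_erase, Finset.mem_sdiff, id]
    constructor
    · rintro ⟨r, ⟨hrq, hrP⟩, hxr⟩
      refine ⟨hunion ▸ Finset.mem_biUnion.mpr ⟨r, hrP, hxr⟩, fun hxq => ?_⟩
      simpa using (hdisj r hrP q hqP hrq).le_bot (Finset.mem_inter.mpr ⟨hxr, hxq⟩)
    · rintro ⟨hxX, hxq⟩
      obtain ⟨r, hrP, hxr⟩ := Finset.mem_biUnion.mp (hunion ▸ hxX : x ∈ P.biUnion id)
      exact ⟨r, ⟨fun h => hxq (h ▸ hxr), hrP⟩, hxr⟩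
  · -- linkedness of P.erase q
    have key : ∀ n, ∀ a ∈ P, a ≠ q → ldist P p a = n →
        Relation.ReflTransGen (LinkStep (P.erase q)) p a := by
      intro n
      induction n using Nat.strong_induction_on with
      | _ n ih =>
        intro a haP haq hdn
        match n, hdn with
        | 0, hdn =>
          have := ldist_spec (hall a haP)
          rw [hdn] at this
          exact this ▸ Relation.ReflTransGen.refl
        | (m+1), hdn =>
          have hspec := ldist_spec (hall a haP)
          rw [hdn] at hspec
          obtain ⟨c, hc, hca⟩ := hspec
          have hcP : c ∈ P := hca.1
          have hdc : ldist P p c ≤ m := ldist_le hc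
          have hap : a ≠ p := by
            intro h; rw [h, hd0] at hdn; exact Nat.succ_ne_zero m hdn.symm
          have hale : ldist P p a ≤ ldist P p q :=
            hqmax a (Finset.mem_erase.mpr ⟨hap, haP⟩)
          have hcq : c ≠ q := by
            intro h
            rw [h] at hdc
            omega
          have hpath := ih (ldist P p c) (by omega) c hcP hcq rfl
          exact hpath.tail ⟨Finset.mem_erase.mpr ⟨hcq, hcP⟩,
            Finset.mem_erase.mpr ⟨haq, haP⟩, hca.2.2⟩
    have key' : ∀ a ∈ P.erase q, Relation.ReflTransGen (LinkStep (P.erase q)) p a := by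
      intro a ha
      exact key (ldist P p a) a (Finset.mem_of_mem_erase ha) (Finset.ne_of_mem_erase ha) rfl
    intro a ha b hb
    have hsymm : Symmetric (LinkStep (P.erase q)) := fun _ _ h => h.symm'
    exact ((@Relation.ReflTransGen.stdSymm _ _ ⟨hsymm⟩).symm _ _ (key' a ha)).trans (key' b hb)
end

section
/- Let (c_j)_{j ≥ 1} be a sequence in A and let x, y ∈ A. Define g₁ := c₁ and, for n ≥ 2, g_n := c_n + Σ_{k=2}^{n} Σ_{j₁+⋯+j_k=n, jᵢ ≥ 1} c_{j₁} x c_{j₂} x ⋯ x c_{j_k}. Then for every n ≥ 2: Σ_{k=2}^{n} Σ_{j₁+⋯+j_k=n, jᵢ ≥ 1} c_{j₁}(x+y)c_{j₂}(x+y)⋯(x+y)c_{j_k} = (g_n − c_n) + Σ_{k=2}^{n} Σ_{j₁+⋯+j_k=n, jᵢ ≥ 1} g_{j₁} y g_{j₂} y ⋯ y g_{j_k}. (This is the algebraic identity underlying the decomposition of the resolvent R = R^⊥ + R^∥ in the renormalized Feynman-graph expansion of the ground state energy.) -/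
/-- `compSum c x n = ∑_{k=2}^{n} ∑_{j₁+⋯+j_k=n, jᵢ≥1} c_{j₁} x c_{j₂} x ⋯ x c_{j_k}`,
the sum over ordered compositions of `n` into `k ≥ 2` positive parts of the
alternating product, taken in left-to-right order. -/
def compSum {A : Type*} [Ring A] (c : ℕ → A) (x : A) (n : ℕ) : A :=
  ∑ k ∈ Finset.Icc 2 n,
    ∑ j ∈ (Fintype.piFinset fun _ : Fin k => Finset.Icc 1 n).filter
        (fun j => ∑ s, j s = n),
      (List.ofFn fun s : Fin k => (if (s : ℕ) = 0 then 1 else x) * c (j s)).prod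

namespace Stmt13Aux

variable {A : Type*} [Ring A]

/-- Sum over compositions of `q` into `k` positive parts of the alternating product. -/
def T (c : ℕ → A) (x : A) (k q : ℕ) : A :=
  ∑ j ∈ (Fintype.piFinset fun _ : Fin k => Finset.Icc 1 q).filter
      (fun j => ∑ s, j s = q),
    (List.ofFn fun s : Fin k => (if (s : ℕ) = 0 then 1 else x) * c (j s)).prod

/-- The recursive form of `c n + compSum c x n`. -/
def D (c : ℕ → A) (x : A) : ℕ → A := fun n =>
  c n + ∑ m ∈ (Finset.Ico 1 n).attach,
    D c x (n - m.1) * (x * c m.1)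
termination_by n => n
decreasing_by
  have h := m.2
  simp only [Finset.mem_Ico] at h
  omega

lemma D_def (c : ℕ → A) (x : A) (n : ℕ) :
    D c x n = c n + ∑ m ∈ Finset.Ico 1 n, D c x (n - m) * (x * c m) := by
  rw [D]
  rw [← Finset.sum_attach (Finset.Ico 1 n) (fun m => D c x (n - m) * (x * c m))]

lemma filter_piFinset_eq (k q N : ℕ) (hqN : q ≤ N) :
    ((Fintype.piFinset fun _ : Fin k => Finset.Icc 1 N).filter
        (fun j => ∑ s, j s = q)) =
    ((Fintype.piFinset fun _ : Fin k => Finset.Icc 1 q).filter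
        (fun j => ∑ s, j s = q)) := by
  ext j
  simp only [Finset.mem_filter, Fintype.mem_piFinset, Finset.mem_Icc]
  constructor
  · rintro ⟨h1, h2⟩
    refine ⟨fun a => ⟨(h1 a).1, ?_⟩, h2⟩
    calc j a ≤ ∑ s, j s := Finset.single_le_sum (fun i _ => Nat.zero_le _) (Finset.mem_univ a)
    _ = q := h2
  · rintro ⟨h1, h2⟩
    exact ⟨fun a => ⟨(h1 a).1, le_trans (h1 a).2 hqN⟩, h2⟩

lemma T_zero (c : ℕ → A) (x : A) {k q : ℕ} (h : q < k) : T c x k q = 0 := by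
  rw [T, Finset.sum_eq_zero]
  intro j hj
  simp only [Finset.mem_filter, Fintype.mem_piFinset, Finset.mem_Icc] at hj
  exfalso
  have : (k : ℕ) ≤ ∑ s, j s := by
    calc (k : ℕ) = ∑ _s : Fin k, 1 := by simp
    _ ≤ ∑ s, j s := Finset.sum_le_sum (fun i _ => (hj.1 i).1)
  omega

lemma T_one (c : ℕ → A) (x : A) {q : ℕ} (hq : 1 ≤ q) : T c x 1 q = c q := by
  rw [T]
  rw [show ((Fintype.piFinset fun _ : Fin 1 => Finset.Icc 1 q).filter
      (fun j => ∑ s, j s = q)) = {fun _ => q} by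
    ext j
    simp only [Finset.mem_filter, Fintype.mem_piFinset, Finset.mem_Icc,
      Finset.mem_singleton, Fin.sum_univ_one]
    constructor
    · rintro ⟨_, h2⟩; funext s; rw [Fin.eq_zero s]; exact h2
    · rintro rfl; exact ⟨fun a => ⟨hq, le_refl q⟩, rfl⟩]
  simp [List.ofFn_succ]

lemma T_succ (c : ℕ → A) (x : A) {k : ℕ} (hk : 1 ≤ k) (n : ℕ) :
    T c x (k + 1) n = ∑ m ∈ Finset.Ico 1 n, T c x k (n - m) * (x * c m) := by
  have hr : ∀ m ∈ Finset.Ico 1 n, T c x k (n - m) * (x * c m)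
      = ∑ j ∈ (Fintype.piFinset fun _ : Fin k => Finset.Icc 1 (n - m)).filter
          (fun j => ∑ s, j s = n - m),
        (List.ofFn fun s : Fin k => (if (s : ℕ) = 0 then 1 else x) * c (j s)).prod
          * (x * c m) := fun m _ => by rw [T, Finset.sum_mul]
  rw [Finset.sum_congr rfl hr, Finset.sum_sigma', T]
  refine Finset.sum_nbij'
    (i := fun j => (⟨j (Fin.last k), fun t => j (Fin.castSucc t)⟩ : Σ _ : ℕ, Fin k → ℕ))
    (j := fun p => Fin.snoc p.2 p.1) ?_ ?_ ?_ ?_ ?_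
  · intro j hj
    simp only [Finset.mem_filter, Fintype.mem_piFinset, Finset.mem_Icc] at hj
    obtain ⟨h1, h2⟩ := hj
    rw [Fin.sum_univ_castSucc] at h2
    have hkle : (k : ℕ) ≤ ∑ t : Fin k, j (Fin.castSucc t) := by
      calc (k : ℕ) = ∑ _t : Fin k, 1 := by simp
      _ ≤ _ := Finset.sum_le_sum (fun i _ => (h1 (Fin.castSucc i)).1)
    simp only [Finset.mem_sigma, Finset.mem_Ico, Finset.mem_filter,
      Fintype.mem_piFinset, Finset.mem_Icc]
    refine ⟨⟨(h1 (Fin.last k)).1, by omega⟩, fun t => ⟨(h1 (Fin.castSucc t)).1, ?_⟩, by omega⟩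
    have h3 : j (Fin.castSucc t) ≤ ∑ t : Fin k, j (Fin.castSucc t) :=
      Finset.single_le_sum (f := fun t : Fin k => j (Fin.castSucc t))
        (fun i _ => Nat.zero_le _) (Finset.mem_univ t)
    omega
  · rintro ⟨m, p⟩ hp
    simp only [Finset.mem_sigma, Finset.mem_Ico, Finset.mem_filter,
      Fintype.mem_piFinset, Finset.mem_Icc] at hp
    obtain ⟨hm, h1, h2⟩ := hp
    simp only [Finset.mem_filter, Fintype.mem_piFinset, Finset.mem_Icc]
    constructor
    · intro a
      induction a using Fin.lastCases with
      | last => rw [Fin.snoc_last]; exact ⟨hm.1, by omega⟩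
      | cast t =>
        rw [Fin.snoc_castSucc]
        exact ⟨(h1 t).1, by have := (h1 t).2; omega⟩
    · rw [Fin.sum_univ_castSucc, Fin.snoc_last]
      simp only [Fin.snoc_castSucc]
      omega
  · intro j _
    exact Fin.snoc_init_self j
  · rintro ⟨m, p⟩ _
    simp only [Fin.snoc_last, Fin.snoc_castSucc]
  · intro j _
    rw [List.ofFn_succ', List.concat_eq_append, List.prod_append, List.prod_cons,
      List.prod_nil, mul_one]
    simp only [Fin.coe_castSucc, Fin.val_last]
    rw [if_neg (by omega : ¬ k = 0)]

lemma D_eq_sum_T (c : ℕ → A) (x : A) : ∀ n, 1 ≤ n →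
    D c x n = ∑ k ∈ Finset.Icc 1 n, T c x k n := by
  intro n
  induction n using Nat.strong_induction_on with
  | _ n ih =>
    intro hn
    rw [D_def]
    have step : ∀ m ∈ Finset.Ico 1 n, D c x (n - m) * (x * c m)
        = ∑ k ∈ Finset.Icc 1 (n - 1), T c x k (n - m) * (x * c m) := by
      intro m hm
      simp only [Finset.mem_Ico] at hm
      rw [ih (n - m) (by omega) (by omega), Finset.sum_mul]
      refine Finset.sum_subset (Finset.Icc_subset_Icc_right (by omega)) ?_
      intro k hk hk2
      simp only [Finset.mem_Icc] at hk hk2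
      rw [T_zero c x (by omega), zero_mul]
    rw [Finset.sum_congr rfl step, Finset.sum_comm]
    have step2 : ∀ k ∈ Finset.Icc 1 (n - 1),
        ∑ m ∈ Finset.Ico 1 n, T c x k (n - m) * (x * c m) = T c x (k + 1) n := by
      intro k hk
      simp only [Finset.mem_Icc] at hk
      rw [T_succ c x hk.1 n]
    rw [Finset.sum_congr rfl step2]
    rw [show Finset.Icc 1 n = insert 1 (Finset.Icc 2 n) by
        ext a; simp only [Finset.mem_insert, Finset.mem_Icc]; omega,
      Finset.sum_insert (by simp), T_one c x hn]
    congr 1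
    rw [show Finset.Icc 2 n = Finset.map (addLeftEmbedding 1) (Finset.Icc 1 (n - 1)) by
        rw [Finset.map_add_left_Icc]; congr 1; omega,
      Finset.sum_map]
    refine Finset.sum_congr rfl fun k _ => ?_
    simp only [addLeftEmbedding_apply]
    rw [Nat.add_comm 1 k]

lemma compSum_eq (c : ℕ → A) (x : A) (n : ℕ) :
    compSum c x n = ∑ k ∈ Finset.Icc 2 n, T c x k n := rfl

lemma D_eq_add (c : ℕ → A) (x : A) (n : ℕ) :
    D c x n = c n + compSum c x n := by
  rcases Nat.lt_or_ge n 2 with h | h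
  · interval_cases n
    · rw [D_def, compSum_eq]; simp
    · rw [D_def, compSum_eq]; simp
  · rw [D_eq_sum_T c x n (by omega), compSum_eq,
      show Finset.Icc 1 n = insert 1 (Finset.Icc 2 n) by
        ext a; simp only [Finset.mem_insert, Finset.mem_Icc]; omega,
      Finset.sum_insert (by simp), T_one c x (by omega)]

lemma D_key (c : ℕ → A) (x y : A) : ∀ n, D c (x + y) n = D (D c x) y n := by
  intro n
  induction n using Nat.strong_induction_on with
  | _ n ih =>
    rw [D_def, D_def (D c x)]
    have e1 : ∀ m ∈ Finset.Ico 1 n, D c (x + y) (n - m) * ((x + y) * c m)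
        = D (D c x) y (n - m) * (x * c m) + D (D c x) y (n - m) * (y * c m) := by
      intro m hm
      simp only [Finset.mem_Ico] at hm
      rw [ih (n - m) (by omega), add_mul x y (c m), mul_add]
    have e2 : ∀ m ∈ Finset.Ico 1 n, D (D c x) y (n - m) * (x * c m)
        = D c x (n - m) * (x * c m)
          + ∑ p ∈ Finset.Ico 1 (n - m), (D (D c x) y (n - m - p) * (y * D c x p)) * (x * c m) := by
      intro m _
      rw [D_def (D c x) y (n - m), add_mul, Finset.sum_mul]
    have e3 : ∀ m ∈ Finset.Ico 1 n, D (D c x) y (n - m) * (y * D c x m)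
        = D (D c x) y (n - m) * (y * c m)
          + ∑ p ∈ Finset.Ico 1 m, (D (D c x) y (n - m) * (y * D c x (m - p))) * (x * c p) := by
      intro m _
      conv_lhs => rw [D_def c x m]
      rw [mul_add y, mul_add (D (D c x) y (n - m))]
      congr 1
      rw [Finset.mul_sum, Finset.mul_sum]
      refine Finset.sum_congr rfl fun p _ => ?_
      simp only [mul_assoc]
    rw [Finset.sum_congr rfl e1, Finset.sum_add_distrib,
      Finset.sum_congr rfl e2, Finset.sum_congr rfl e3,
      Finset.sum_add_distrib, Finset.sum_add_distrib, D_def c x n]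
    have key : (∑ m ∈ Finset.Ico 1 n, ∑ p ∈ Finset.Ico 1 (n - m),
          (D (D c x) y (n - m - p) * (y * D c x p)) * (x * c m))
        = ∑ m ∈ Finset.Ico 1 n, ∑ p ∈ Finset.Ico 1 m,
          (D (D c x) y (n - m) * (y * D c x (m - p))) * (x * c p) := by
      rw [Finset.sum_sigma', Finset.sum_sigma']
      refine Finset.sum_nbij'
        (i := fun q => (⟨q.1 + q.2, q.1⟩ : Σ _ : ℕ, ℕ))
        (j := fun q => (⟨q.2, q.1 - q.2⟩ : Σ _ : ℕ, ℕ)) ?_ ?_ ?_ ?_ ?_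
      · rintro ⟨m, p⟩ hq
        simp only [Finset.mem_sigma, Finset.mem_Ico] at hq ⊢
        omega
      · rintro ⟨m, p⟩ hq
        simp only [Finset.mem_sigma, Finset.mem_Ico] at hq ⊢
        omega
      · rintro ⟨m, p⟩ hq
        simp only [Finset.mem_sigma, Finset.mem_Ico] at hq
        show (⟨m, m + p - m⟩ : Σ _ : ℕ, ℕ) = ⟨m, p⟩
        rw [show m + p - m = p from by omega]
      · rintro ⟨m, p⟩ hq
        simp only [Finset.mem_sigma, Finset.mem_Ico] at hq
        show (⟨p + (m - p), p⟩ : Σ _ : ℕ, ℕ) = ⟨m, p⟩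
        rw [show p + (m - p) = m from by omega]
      · rintro ⟨m, p⟩ hq
        simp only [Finset.mem_sigma, Finset.mem_Ico] at hq
        have h1 : m + p - m = p := by omega
        have h2 : n - (m + p) = n - m - p := by omega
        rw [h1, h2]
    rw [key]
    abel

lemma compSum_congr {c c' : ℕ → A} (x : A) (n : ℕ)
    (h : ∀ q, 1 ≤ q → q ≤ n → c q = c' q) : compSum c x n = compSum c' x n := by
  unfold compSum
  refine Finset.sum_congr rfl fun k _ => Finset.sum_congr rfl fun j hj => ?_
  simp only [Finset.mem_filter, Fintype.mem_piFinset, Finset.mem_Icc] at hj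
  have : (fun s : Fin k => (if (s : ℕ) = 0 then 1 else x) * c (j s))
      = (fun s : Fin k => (if (s : ℕ) = 0 then 1 else x) * c' (j s)) :=
    funext fun s => by rw [h (j s) (hj.1 s).1 (hj.1 s).2]
  rw [this]

end Stmt13Aux

/-- **The algebraic identity underlying the decomposition `R = R^⊥ + R^∥` in
the renormalized Feynman-graph expansion of the ground state energy.**
Let `A` be a (not necessarily commutative) ring, `(c_j)_{j≥1}` a sequence in
`A` and `x, y ∈ A`.  Define `g₁ := c₁` and, for `n ≥ 2`,
`g_n := c_n + ∑_{k=2}^{n} ∑_{j₁+⋯+j_k=n, jᵢ≥1} c_{j₁} x ⋯ x c_{j_k}`.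
Then for every `n ≥ 2`:
`∑_{k=2}^{n} ∑_{j₁+⋯+j_k=n} c_{j₁}(x+y)⋯(x+y)c_{j_k}
  = (g_n - c_n) + ∑_{k=2}^{n} ∑_{j₁+⋯+j_k=n} g_{j₁} y ⋯ y g_{j_k}`. -/
theorem stmt13 {A : Type*} [Ring A] (c : ℕ → A) (x y : A) (g : ℕ → A)
    (hg1 : g 1 = c 1)
    (hg : ∀ n, 2 ≤ n → g n = c n + compSum c x n) :
    ∀ n, 2 ≤ n → compSum c (x + y) n = (g n - c n) + compSum g y n := by
  intro n hn
  open Stmt13Aux in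
  have hgD : ∀ q, 1 ≤ q → g q = D c x q := by
    intro q hq
    rcases Nat.lt_or_ge q 2 with h | h
    · interval_cases q
      rw [hg1, D_def]; simp
    · rw [hg q h, D_eq_add]
  have h1 : compSum g y n = compSum (D c x) y n :=
    compSum_congr y n (fun q hq _ => hgD q hq)
  have h2 : compSum c (x + y) n = D c (x + y) n - c n := by
    rw [D_eq_add]; abel
  have h3 : compSum (D c x) y n = D (D c x) y n - D c x n := by
    rw [D_eq_add (D c x) y n]; abel
  rw [h2, D_key, h1, h3, hgD n (by omega), D_eq_add (D c x) y n]
  abel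
end

section
/- Let N ≥ 2. For each pair (a, b) with 1 ≤ a ≤ b ≤ N let c(a,b) ∈ A, and for each t with 1 ≤ t ≤ N−1 let x_t, y_t ∈ A. For 1 ≤ a ≤ b ≤ N define g(a,b) := c(a,b) + Σ_{k=2}^{b−a+1} Σ over chains a−1 = t₀ < t₁ < ⋯ < t_k = b of c(t₀+1, t₁) x_{t₁} c(t₁+1, t₂) x_{t₂} ⋯ x_{t_{k−1}} c(t_{k−1}+1, t_k). Then: Σ_{k=2}^{N} Σ over chains 0 = t₀ < t₁ < ⋯ < t_k = N of c(1, t₁)(x_{t₁}+y_{t₁}) c(t₁+1, t₂) (x_{t₂}+y_{t₂}) ⋯ (x_{t_{k−1}}+y_{t_{k−1}}) c(t_{k−1}+1, N) = (g(1,N) − c(1,N)) + Σ_{k=2}^{N} Σ over chains 0 = t₀ < t₁ < ⋯ < t_k = N of g(1, t₁) y_{t₁} g(t₁+1, t₂) y_{t₂} ⋯ y_{t_{k−1}} g(t_{k−1}+1, N). (This is the algebraic identity underlying the resolvent decomposition in the renormalized expansion of the ground state.) -/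
/-- Given interval labels `c a b`, in-between factors `x t`, and a strictly
increasing list `[u₁, …, u_{k-1}]` of intermediate cut points, the chain
product `c(a,u₁) ⬝ x_{u₁} ⬝ c(u₁+1,u₂) ⬝ x_{u₂} ⋯ x_{u_{k-1}} ⬝ c(u_{k-1}+1, b)`,
taken in left-to-right order.  (A chain `a-1 = t₀ < t₁ < ⋯ < t_k = b` is
encoded by its set of intermediate points `{t₁, …, t_{k-1}} ⊆ {a, …, b-1}`.) -/
def chainProd {A : Type*} [Ring A] (c : ℕ → ℕ → A) (x : ℕ → A) :
    ℕ → ℕ → List ℕ → A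
  | a, b, [] => c a b
  | a, b, u :: us => c a u * x u * chainProd c x (u + 1) b us

section Aux
variable {A : Type*} [Ring A]

/-- Split a sum over the powerset by the minimum element. -/
lemma sum_powerset_min (s : Finset ℕ) (f : Finset ℕ → A) :
    ∑ T ∈ s.powerset, f T
      = f ∅ + ∑ u ∈ s, ∑ T ∈ (s.filter (fun v => u < v)).powerset, f (insert u T) := by
  induction s using Finset.induction_on_min with
  | empty => simp
  | insert a s ha ih =>
      have ha' : a ∉ s := fun h => lt_irrefl a (ha a h)
      rw [Finset.sum_powerset_insert ha', ih, Finset.sum_insert ha']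
      have h1 : (insert a s).filter (fun v => a < v) = s := by
        ext v
        simp only [Finset.mem_filter, Finset.mem_insert]
        constructor
        · rintro ⟨h | h, hlt⟩
          · exact absurd hlt (by omega)
          · exact h
        · exact fun h => ⟨Or.inr h, ha v h⟩
      have h2 : ∀ u ∈ s, (insert a s).filter (fun v => u < v)
          = s.filter (fun v => u < v) := by
        intro u hu
        ext v
        simp only [Finset.mem_filter, Finset.mem_insert]
        have := ha u hu
        constructor
        · rintro ⟨h | h, hlt⟩
          · omega
          · exact ⟨h, hlt⟩
        · exact fun h => ⟨Or.inr h.1, h.2⟩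
      have h2' : (∑ u ∈ s, ∑ T ∈ ((insert a s).filter (fun v => u < v)).powerset,
            f (insert u T))
          = ∑ u ∈ s, ∑ T ∈ (s.filter (fun v => u < v)).powerset, f (insert u T) :=
        Finset.sum_congr rfl fun u hu => by rw [h2 u hu]
      rw [h1, h2']
      abel

lemma sum_powerset_nonempty (s : Finset ℕ) (f : Finset ℕ → A) :
    ∑ T ∈ s.powerset.filter (fun T => T.Nonempty), f T
      = ∑ u ∈ s, ∑ T ∈ (s.filter (fun v => u < v)).powerset, f (insert u T) := by
  have h := Finset.sum_filter_add_sum_filter_not s.powerset (fun T => T.Nonempty) f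
  have h2 : s.powerset.filter (fun T => ¬ T.Nonempty) = {∅} := by
    ext T
    simp [Finset.not_nonempty_iff_eq_empty]
    rintro rfl; exact Finset.empty_subset s
  rw [h2, Finset.sum_singleton, sum_powerset_min s f] at h
  have h3 : (∑ T ∈ s.powerset.filter (fun T => T.Nonempty), f T) + f ∅
      = (∑ u ∈ s, ∑ T ∈ (s.filter (fun v => u < v)).powerset, f (insert u T)) + f ∅ := by
    rw [h]; abel
  exact add_right_cancel h3

/-- Total chain sum over all (possibly empty) cut sets. -/
def P (c : ℕ → ℕ → A) (x : ℕ → A) (a b : ℕ) : A :=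
  ∑ T ∈ (Finset.Icc a (b - 1)).powerset, chainProd c x a b (T.sort (· ≤ ·))

lemma P_eq (c : ℕ → ℕ → A) (x : ℕ → A) (a b : ℕ) :
    P c x a b = c a b +
      ∑ T ∈ (Finset.Icc a (b - 1)).powerset.filter (fun T => T.Nonempty),
        chainProd c x a b (T.sort (· ≤ ·)) := by
  unfold P
  rw [← Finset.sum_filter_add_sum_filter_not _ (fun T => T.Nonempty)]
  have h2 : (Finset.Icc a (b-1)).powerset.filter (fun T => ¬ T.Nonempty) = {∅} := by
    ext T
    simp [Finset.not_nonempty_iff_eq_empty]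
    rintro rfl; exact Finset.empty_subset _
  rw [h2, Finset.sum_singleton]
  simp [chainProd]
  abel

/-- Recursion: split at the first cut point. -/
lemma P_rec (c : ℕ → ℕ → A) (x : ℕ → A) (a b : ℕ) :
    P c x a b = c a b +
      ∑ u ∈ Finset.Icc a (b - 1), c a u * x u * P c x (u + 1) b := by
  rw [P_eq, sum_powerset_nonempty]
  congr 1
  apply Finset.sum_congr rfl
  intro u hu
  have hfil : (Finset.Icc a (b-1)).filter (fun v => u < v) = Finset.Icc (u+1) (b-1) := by
    ext v
    simp only [Finset.mem_filter, Finset.mem_Icc]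
    simp only [Finset.mem_Icc] at hu
    omega
  rw [hfil]
  unfold P
  rw [Finset.mul_sum]
  apply Finset.sum_congr rfl
  intro T hT
  simp only [Finset.mem_powerset] at hT
  have hlt : ∀ v ∈ T, u < v := by
    intro v hv
    have := hT hv
    simp only [Finset.mem_Icc] at this
    omega
  have hnotmem : u ∉ T := fun h => lt_irrefl u (hlt u h)
  rw [Finset.sort_insert _ (fun v hv => le_of_lt (hlt v hv)) hnotmem]
  rfl

/-- Swap a triangular double sum. -/
lemma sum_swap_tri (m n : ℕ) (hm : 1 ≤ m) (h : ℕ → ℕ → A) :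
    ∑ v ∈ Finset.Icc m n, ∑ u ∈ Finset.Icc m (v - 1), h u v
      = ∑ u ∈ Finset.Icc m n, ∑ v ∈ Finset.Icc (u + 1) n, h u v := by
  have e1 : ∀ v ∈ Finset.Icc m n,
      Finset.Icc m (v-1) = (Finset.Icc m n).filter (fun u => u < v) := by
    intro v hv
    simp only [Finset.mem_Icc] at hv
    ext u
    simp only [Finset.mem_filter, Finset.mem_Icc]
    omega
  have e2 : ∀ u ∈ Finset.Icc m n,
      (Finset.Icc m n).filter (fun v => u < v) = Finset.Icc (u+1) n := by
    intro u hu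
    simp only [Finset.mem_Icc] at hu
    ext v
    simp only [Finset.mem_filter, Finset.mem_Icc]
    omega
  calc ∑ v ∈ Finset.Icc m n, ∑ u ∈ Finset.Icc m (v - 1), h u v
      = ∑ v ∈ Finset.Icc m n, ∑ u ∈ Finset.Icc m n, if u < v then h u v else 0 := by
        apply Finset.sum_congr rfl
        intro v hv
        rw [e1 v hv, Finset.sum_filter]
    _ = ∑ u ∈ Finset.Icc m n, ∑ v ∈ Finset.Icc m n, if u < v then h u v else 0 :=
        Finset.sum_comm
    _ = ∑ u ∈ Finset.Icc m n, ∑ v ∈ Finset.Icc (u + 1) n, h u v := by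
        apply Finset.sum_congr rfl
        intro u hu
        rw [← e2 u hu, Finset.sum_filter]

end Aux

/-- **The algebraic identity underlying the resolvent decomposition in the
renormalized expansion of the ground state.**
Let `A` be a ring, `N ≥ 2`, `c(a,b) ∈ A` for `1 ≤ a ≤ b ≤ N`, and
`x_t, y_t ∈ A` for `1 ≤ t ≤ N-1`.  Define
`g(a,b) := c(a,b) + ∑_{k=2}^{b-a+1} ∑_{chains a-1=t₀<⋯<t_k=b}
c(t₀+1,t₁) x_{t₁} ⋯ x_{t_{k-1}} c(t_{k-1}+1,t_k)` (the sum over chains with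
`k ≥ 2` blocks being the sum over nonempty subsets `T ⊆ {a, …, b-1}` of
intermediate cut points).  Then
`∑_{k=2}^{N} ∑_{chains 0=t₀<⋯<t_k=N} c(1,t₁)(x_{t₁}+y_{t₁})⋯(x_{t_{k-1}}+y_{t_{k-1}})c(t_{k-1}+1,N)
 = (g(1,N) - c(1,N)) + ∑_{k=2}^{N} ∑_{chains} g(1,t₁) y_{t₁} ⋯ y_{t_{k-1}} g(t_{k-1}+1,N)`. -/
theorem stmt14 {A : Type*} [Ring A] (N : ℕ) (hN : 2 ≤ N)
    (c : ℕ → ℕ → A) (x y : ℕ → A) (g : ℕ → ℕ → A)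
    (hg : ∀ a b, 1 ≤ a → a ≤ b → b ≤ N →
      g a b = c a b +
        ∑ T ∈ (Finset.Icc a (b - 1)).powerset.filter (fun T => T.Nonempty),
          chainProd c x a b (T.sort (· ≤ ·))) :
    ∑ T ∈ (Finset.Icc 1 (N - 1)).powerset.filter (fun T => T.Nonempty),
        chainProd c (fun t => x t + y t) 1 N (T.sort (· ≤ ·))
      = (g 1 N - c 1 N) +
        ∑ T ∈ (Finset.Icc 1 (N - 1)).powerset.filter (fun T => T.Nonempty),
          chainProd g y 1 N (T.sort (· ≤ ·)) := by
  have hgP : ∀ a b, 1 ≤ a → a ≤ b → b ≤ N → g a b = P c x a b := by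
    intro a b h1 h2 h3
    rw [hg a b h1 h2 h3, P_eq]
  have hgrec : ∀ a b, 1 ≤ a → a ≤ b → b ≤ N →
      g a b = c a b + ∑ u ∈ Finset.Icc a (b - 1), c a u * x u * g (u + 1) b := by
    intro a b h1 h2 h3
    rw [hgP a b h1 h2 h3, P_rec]
    congr 1
    apply Finset.sum_congr rfl
    intro u hu
    simp only [Finset.mem_Icc] at hu
    rw [hgP (u+1) b (by omega) (by omega) h3]
  have key : ∀ d a b, b - a ≤ d → 1 ≤ a → a ≤ b → b ≤ N →
      P c (fun t => x t + y t) a b = P g y a b := by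
    intro d
    induction d with
    | zero =>
        intro a b hd h1 h2 h3
        have hab : a = b := by omega
        have hicc : Finset.Icc a (b - 1) = ∅ := by
          apply Finset.Icc_eq_empty
          omega
        rw [P_rec c, P_rec g, hicc, Finset.sum_empty, Finset.sum_empty,
          hgrec a b h1 h2 h3, hicc, Finset.sum_empty]
        abel
    | succ d ih =>
        intro a b hd h1 h2 h3
        rw [P_rec c, P_rec g]
        have IH' : ∀ u ∈ Finset.Icc a (b - 1),
            P c (fun t => x t + y t) (u + 1) b = P g y (u + 1) b := by
          intro u hu
          simp only [Finset.mem_Icc] at hu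
          exact ih (u+1) b (by omega) (by omega) (by omega) h3
        have l1 : ∑ u ∈ Finset.Icc a (b - 1),
              c a u * (x u + y u) * P c (fun t => x t + y t) (u + 1) b
            = (∑ u ∈ Finset.Icc a (b - 1), c a u * x u * P g y (u + 1) b)
              + ∑ u ∈ Finset.Icc a (b - 1), c a u * y u * P g y (u + 1) b := by
          rw [← Finset.sum_add_distrib]
          apply Finset.sum_congr rfl
          intro u hu
          rw [IH' u hu]
          noncomm_ring
        have e1 : ∀ v ∈ Finset.Icc a (b - 1),
            g a v * y v * P g y (v + 1) b
              = c a v * y v * P g y (v + 1) b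
                + ∑ u ∈ Finset.Icc a (v - 1),
                    c a u * x u * (g (u + 1) v * y v * P g y (v + 1) b) := by
          intro v hv
          simp only [Finset.mem_Icc] at hv
          rw [hgrec a v h1 hv.1 (by omega), add_mul, add_mul, Finset.sum_mul,
            Finset.sum_mul]
          congr 1
          apply Finset.sum_congr rfl
          intro u _
          noncomm_ring
        have e3 : ∀ u ∈ Finset.Icc a (b - 1),
            ∑ v ∈ Finset.Icc (u + 1) (b - 1),
                c a u * x u * (g (u + 1) v * y v * P g y (v + 1) b)
              = c a u * x u * (P g y (u + 1) b - g (u + 1) b) := by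
          intro u hu
          rw [← Finset.mul_sum]
          congr 1
          have hr := P_rec g y (u + 1) b
          rw [hr]
          noncomm_ring
        have r1 : ∑ v ∈ Finset.Icc a (b - 1), g a v * y v * P g y (v + 1) b
            = (∑ v ∈ Finset.Icc a (b - 1), c a v * y v * P g y (v + 1) b)
              + ((∑ u ∈ Finset.Icc a (b - 1), c a u * x u * P g y (u + 1) b)
                - ∑ u ∈ Finset.Icc a (b - 1), c a u * x u * g (u + 1) b) := by
          rw [Finset.sum_congr rfl e1, Finset.sum_add_distrib,
            sum_swap_tri a (b - 1) h1, Finset.sum_congr rfl e3]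
          congr 1
          rw [← Finset.sum_sub_distrib]
          apply Finset.sum_congr rfl
          intro u _
          noncomm_ring
        have hcb : c a b = g a b
            - ∑ u ∈ Finset.Icc a (b - 1), c a u * x u * g (u + 1) b := by
          rw [hgrec a b h1 h2 h3]
          noncomm_ring
        rw [l1, r1, hcb]
        noncomm_ring
  have E1 : ∑ T ∈ (Finset.Icc 1 (N - 1)).powerset.filter (fun T => T.Nonempty),
        chainProd c (fun t => x t + y t) 1 N (T.sort (· ≤ ·))
      = P c (fun t => x t + y t) 1 N - c 1 N := by
    rw [P_eq]; abel
  have E2 : ∑ T ∈ (Finset.Icc 1 (N - 1)).powerset.filter (fun T => T.Nonempty),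
        chainProd g y 1 N (T.sort (· ≤ ·))
      = P g y 1 N - g 1 N := by
    rw [P_eq]; abel
  rw [E1, E2, key N 1 N (by omega) (by omega) (by omega) (by omega)]
  noncomm_ring
end

section
/- Let n ≥ 2 and let P be a pair partition of N_n := {1, …, n}. Suppose P_e is a linked component of P with 1 ∈ ⋃P_e and n ∈ ⋃P_e. Then for every linked component Q of P with Q ≠ P_e, no element of ⋃P_e lies in the closed interval [min ⋃Q, max ⋃Q]; consequently ⋃Q is contained in a single maximal interval of consecutive integers of N_n ∖ ⋃P_e. -/
/-- `C` is a linked component of the pairing `P`: a nonempty subset of `P`,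
any two of whose members are joined by a linked path in `P`, and which is
closed under linked paths in `P`, i.e. an equivalence class of the
"joined by a linked path" relation on `P`. -/
def IsLinkedComponent (P C : Finset (Finset ℤ)) : Prop :=
  C ⊆ P ∧ C.Nonempty ∧
  (∀ p ∈ C, ∀ q ∈ C, Relation.ReflTransGen (LinkStep P) p q) ∧
  (∀ p ∈ C, ∀ q ∈ P, Relation.ReflTransGen (LinkStep P) p q → q ∈ C)

/-- **Separation of linked components.**
Let `n ≥ 2` and let `P` be a pair partition of `N_n = {1, …, n}`.  Suppose
`P_e` is a linked component of `P` with `1 ∈ ⋃P_e` and `n ∈ ⋃P_e`.  Then for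
every linked component `Q` of `P` with `Q ≠ P_e`, no element of `⋃P_e` lies in
the closed interval `[min ⋃Q, max ⋃Q]`; consequently `⋃Q` is contained in a
single maximal interval of consecutive integers of `N_n ∖ ⋃P_e`: every integer
of `N_n` lying between two elements of `⋃Q` avoids `⋃P_e`. -/
theorem stmt15 (n : ℕ) (hn : 2 ≤ n)
    (P : Finset (Finset ℤ)) (hP : IsPairPartition (Finset.Icc 1 (n : ℤ)) P)
    (Pe Q : Finset (Finset ℤ))
    (hPe : IsLinkedComponent P Pe)
    (h1 : (1 : ℤ) ∈ Pe.biUnion id) (hntop : (n : ℤ) ∈ Pe.biUnion id)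
    (hQ : IsLinkedComponent P Q) (hne : Q ≠ Pe) :
    (∀ m ∈ Pe.biUnion id, ∀ a ∈ Q.biUnion id, ∀ b ∈ Q.biUnion id,
        ¬ (a ≤ m ∧ m ≤ b)) ∧
    (∀ a ∈ Q.biUnion id, ∀ b ∈ Q.biUnion id, ∀ z ∈ Finset.Icc 1 (n : ℤ),
        a ≤ z → z ≤ b → z ∉ Pe.biUnion id) := by
  classical
  obtain ⟨hcard, hdisj, hun⟩ := hP
  have hcompeq : ∀ p, p ∈ Q → p ∈ Pe → Q = Pe := by
    intro p hpQ hpPe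
    apply Finset.Subset.antisymm
    · intro q hq
      exact hPe.2.2.2 p hpPe q (hQ.1 hq) (hQ.2.2.1 p hpQ q hq)
    · intro q hq
      exact hQ.2.2.2 p hpQ q (hPe.1 hq) (hPe.2.2.1 p hpPe q hq)
  have hUV : ∀ z : ℤ, z ∈ Pe.biUnion id → z ∈ Q.biUnion id → False := by
    intro z hzU hzV
    simp only [Finset.mem_biUnion, id] at hzU hzV
    obtain ⟨p, hp, hzp⟩ := hzU
    obtain ⟨q, hq, hzq⟩ := hzV
    by_cases hpq : p = q
    · exact hne (hcompeq p (hpq ▸ hq) hp)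
    · exact Finset.not_disjoint_iff.mpr ⟨z, hzp, hzq⟩
        (hdisj p (hPe.1 hp) q (hQ.1 hq) hpq)
  have key1 : ∀ m ∈ Pe.biUnion id, ∀ a ∈ Q.biUnion id, ∀ b ∈ Q.biUnion id,
      ¬ (a ≤ m ∧ m ≤ b) := by
    intro m hm a ha b hb hab
    obtain ⟨ham, hmb⟩ := hab
    have ha' := ha
    have hb' := hb
    simp only [Finset.mem_biUnion, id] at ha' hb'
    obtain ⟨ra, hraQ, hara⟩ := ha'
    obtain ⟨rb, hrbQ, hbrb⟩ := hb'
    -- Step 1: find a pair r ∈ Q straddling m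
    have key : ∀ c, Relation.ReflTransGen (LinkStep P) ra c →
        ((∃ r ∈ Q, ∃ x ∈ r, ∃ y ∈ r, x ≤ m ∧ m ≤ y) ∨ ∀ e ∈ c, e < m) := by
      intro c h
      induction h with
      | refl =>
        by_cases hx : ∃ e ∈ ra, m ≤ e
        · obtain ⟨e, he, hme⟩ := hx
          exact Or.inl ⟨ra, hraQ, a, hara, e, he, ham, hme⟩
        · push_neg at hx
          exact Or.inr hx
      | @tail c1 c2 h1' h2 ih =>
        rcases ih with found | hall
        · exact Or.inl found
        · by_cases hx : ∃ e ∈ c2, m ≤ e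
          · obtain ⟨e, he, hme⟩ := hx
            obtain ⟨_, _, a2, ha2, b2, hb2, c2e, hc2e, hba, hac⟩ := h2.2.2
            refine Or.inl ⟨c2, ?_, a2, ha2, e, he, ?_, hme⟩
            · exact hQ.2.2.2 ra hraQ c2 h2.2.1 (h1'.tail h2)
            · exact le_of_lt (lt_of_le_of_lt hac (hall _ hc2e))
          · push_neg at hx
            exact Or.inr hx
    rcases key rb (hQ.2.2.1 ra hraQ rb hrbQ) with ⟨r, hrQ, x, hxr, y, hyr, hxm, hmy⟩ | hall
    · -- Step 2: 1 < x < m < y; find a Pe pair crossing the boundary of (x,y)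
      have hxV : x ∈ Q.biUnion id := Finset.mem_biUnion.mpr ⟨r, hrQ, hxr⟩
      have hyV : y ∈ Q.biUnion id := Finset.mem_biUnion.mpr ⟨r, hrQ, hyr⟩
      have hxm' : x < m := lt_of_le_of_ne hxm (fun h => hUV m hm (h ▸ hxV))
      have hmy' : m < y := lt_of_le_of_ne hmy (fun h => hUV m hm (h ▸ hyV))
      have hx1 : (1 : ℤ) ≤ x := by
        have : x ∈ Finset.Icc 1 (n : ℤ) := by
          rw [← hun]
          exact Finset.mem_biUnion.mpr ⟨r, hQ.1 hrQ, hxr⟩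
        exact (Finset.mem_Icc.mp this).1
      have h1x : (1 : ℤ) < x :=
        lt_of_le_of_ne hx1 (fun h => hUV 1 h1 (h ▸ hxV))
      obtain ⟨p1, hp1, h1p1⟩ : ∃ p ∈ Pe, (1 : ℤ) ∈ p := by
        simpa only [Finset.mem_biUnion, id] using h1
      obtain ⟨pm, hpm, hmpm⟩ : ∃ p ∈ Pe, m ∈ p := by
        simpa only [Finset.mem_biUnion, id] using hm
      have tri : ∀ p ∈ Pe, ∀ e ∈ p, e < x ∨ (x < e ∧ e < y) ∨ y < e := by
        intro p hp e he
        have heU : e ∈ Pe.biUnion id := Finset.mem_biUnion.mpr ⟨p, hp, he⟩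
        have hex : e ≠ x := fun h => hUV e heU (h ▸ hxV)
        have hey : e ≠ y := fun h => hUV e heU (h ▸ hyV)
        rcases lt_trichotomy e x with h | h | h
        · exact Or.inl h
        · exact absurd h hex
        · rcases lt_trichotomy e y with h' | h' | h'
          · exact Or.inr (Or.inl ⟨h, h'⟩)
          · exact absurd h' hey
          · exact Or.inr (Or.inr h')
      have key2 : ∀ c, Relation.ReflTransGen (LinkStep P) p1 c →
          ((∃ p ∈ Pe, (∃ u ∈ p, x < u ∧ u < y) ∧ (∃ v ∈ p, v < x ∨ y < v)) ∨
            ∀ e ∈ c, e < x ∨ y < e) := by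
        intro c h
        induction h with
        | refl =>
          by_cases hin : ∃ u ∈ p1, x < u ∧ u < y
          · exact Or.inl ⟨p1, hp1, hin, ⟨1, h1p1, Or.inl h1x⟩⟩
          · refine Or.inr fun e he => ?_
            rcases tri p1 hp1 e he with h | h | h
            · exact Or.inl h
            · exact absurd ⟨e, he, h⟩ hin
            · exact Or.inr h
        | @tail c1 c2 h1' h2 ih =>
          rcases ih with found | hall
          · exact Or.inl found
          · have hc2Pe : c2 ∈ Pe := hPe.2.2.2 p1 hp1 c2 h2.2.1 (h1'.tail h2)
            by_cases hin : ∃ u ∈ c2, x < u ∧ u < y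
            · by_cases hout : ∃ v ∈ c2, v < x ∨ y < v
              · exact Or.inl ⟨c2, hc2Pe, hin, hout⟩
              · push_neg at hout
                obtain ⟨_, ⟨ae, hae, be, hbe, ce, hce, hba, hac⟩, _⟩ := h2.2.2
                have h1b := (hout be hbe).1
                have h2c := (hout ce hce).2
                have := hall ae hae
                rcases this with h | h <;> omega
            · refine Or.inr fun e he => ?_
              rcases tri c2 hc2Pe e he with h | h | h
              · exact Or.inl h
              · exact absurd ⟨e, he, h⟩ hin
              · exact Or.inr h
      rcases key2 pm (hPe.2.2.1 p1 hp1 pm hpm) with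
        ⟨p, hp, ⟨u, hu, hux, huy⟩, ⟨v, hv, hvout⟩⟩ | hall
      · -- Step 3: p is linked to r, contradicting Q ≠ Pe
        have huU : u ∈ Pe.biUnion id := Finset.mem_biUnion.mpr ⟨p, hp, hu⟩
        have hur : u ∉ r := fun h => hUV u huU (Finset.mem_biUnion.mpr ⟨r, hrQ, h⟩)
        have hpr : p ≠ r := fun h => hur (h ▸ hu)
        have hlink : LinkStep P p r := by
          refine ⟨hPe.1 hp, hQ.1 hrQ, hpr,
            ⟨u, hu, x, hxr, y, hyr, le_of_lt hux, le_of_lt huy⟩, ?_⟩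
          rcases hvout with h | h
          · exact ⟨x, hxr, v, hv, u, hu, le_of_lt h, le_of_lt hux⟩
          · exact ⟨y, hyr, u, hu, v, hv, le_of_lt huy, le_of_lt h⟩
        have hrPe : r ∈ Pe :=
          hPe.2.2.2 p hp r (hQ.1 hrQ) (Relation.ReflTransGen.single hlink)
        exact hne (hcompeq r hrQ hrPe)
      · rcases hall m hmpm with h | h <;> omega
    · exact absurd (hall b hbrb) (not_lt.mpr hmb)
  refine ⟨key1, ?_⟩
  intro a ha b hb z _ haz hzb hzU
  exact key1 z hzU a ha b hb ⟨haz, hzb⟩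
end
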